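/- arXiv:math/0608553 — 12 statements merged into one kernel-verified Lean document; each statement's English description precedes it below -/
import Mathlib

section
/- For r, s ∈ [0,1], the measure μ_s is the continuous image of μ_r (i.e., there exists a continuous map f : Ω → Ω with μ_s = μ_r ∘ f⁻¹, the pushforward of μ_r under f) if and only if s is binomially reducible to r. -/
open MeasureTheory Polynomial

/-- `P` is a partition polynomial: `P(X) = ∑_{i=0}^n a_i X^i (1-X)^(n-i)` with
integers `0 ≤ a_i ≤ C(n,i)`. -/
def IsPartitionPolynomial (P : Polynomial ℤ) : Prop :=
  ∃ (n : ℕ) (a : ℕ → ℤ),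
    (∀ i ≤ n, 0 ≤ a i ∧ a i ≤ (n.choose i : ℤ)) ∧
    P = ∑ i ∈ Finset.range (n + 1), C (a i) * X ^ i * (1 - X) ^ (n - i)

/-- `μ` is the Bernoulli(`r`) product measure on the Cantor set `ℕ → Bool`:
every cylinder specifying the coordinates in a finite set `s` to agree with `e`
has measure `r^(#1s) * (1-r)^(#0s)`.  (This characterizes the infinite power of
the `(r, 1-r)` measure on `{0,1}` uniquely among Borel measures.) -/
def IsBernoulli (r : ℝ) (μ : Measure (ℕ → Bool)) : Prop :=
  ∀ (s : Finset ℕ) (e : ℕ → Bool),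
    μ {x : ℕ → Bool | ∀ i ∈ s, x i = e i} =
      ENNReal.ofReal (r ^ (s.filter fun i => e i = true).card *
        (1 - r) ^ (s.filter fun i => e i = false).card)

/-!
Realize `μ_r` as `infinitePi` of `Ber(true, false, r)`. If `f` is continuous, the set
`f⁻¹' {x | x 0 = true}` is clopen, so by compactness it depends only on the first `N` coordinates;
its measure is then `∑ₖ aₖ rᵏ (1 - r)^(N - k)`, where `aₖ ≤ C(N, k)` is the number of words of
length `N` with `k` ones whose cylinder lies in the set. Conversely, given such a sum, pick a set
`W` of words of length `n` containing `aₖ` words with `k` ones, cut `x` into consecutive blocks of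
length `n` and record whether each block lies in `W`: the blocks are i.i.d., so the image of `μ_r`
is `μ_s`.
-/

open Measure ProbabilityTheory unitInterval Finset

lemma prod_ite_bool {ι R : Type*} [CommMonoid R] (s : Finset ι) (e : ι → Bool) (a b : R) :
    ∏ i ∈ s, (if e i then a else b) =
      a ^ #{i ∈ s | e i = true} * b ^ #{i ∈ s | e i = false} := by
  simp [Finset.prod_ite]

lemma aeval_sum_C_mul_X_pow_mul_one_sub_X_pow {A : Type*} [CommRing A] (x : A) (n : ℕ)
    (a : ℕ → ℤ) :
    aeval x (∑ i ∈ range (n + 1), C (a i) * X ^ i * (1 - X) ^ (n - i)) =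
      ∑ i ∈ range (n + 1), (a i : A) * (x ^ i * (1 - x) ^ (n - i)) := by
  simp [mul_assoc]

lemma bernoulliMeasure_real_singleton_bool (p : I) (b : Bool) :
    Ber(true, false, p).real {b} = if b then (p : ℝ) else 1 - p := by
  cases b <;> simp

lemma eq_bernoulliMeasure_of_measureReal_true (p : I) (m : Measure Bool)
    [IsProbabilityMeasure m] (h : m.real {true} = p) : m = Ber(true, false, p) := by
  refine ext_of_measureReal_singleton fun b => ?_
  cases b
  · have hfalse : ({false} : Set Bool) = {true}ᶜ := by ext b; simp
    rw [hfalse, probReal_compl_eq_one_sub (measurableSet_singleton _),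
      probReal_compl_eq_one_sub (measurableSet_singleton _), h,
      bernoulliMeasure_real_singleton_bool]
    rfl
  · rw [h, bernoulliMeasure_real_singleton_bool]
    rfl

section Words

variable {ι : Type*} [Fintype ι] (p : I)

lemma pi_bernoulliMeasure_real_singleton (w : ι → Bool) :
    (Measure.pi fun _ : ι => Ber(true, false, p)).real {w} =
      ∏ i, if w i then (p : ℝ) else 1 - p := by
  simp only [measureReal_def, ← Set.univ_pi_singleton, pi_pi, ENNReal.toReal_prod]
  simp only [← measureReal_def, bernoulliMeasure_real_singleton_bool]

lemma card_filter_card_true_eq_choose [DecidableEq ι] (k : ℕ) :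
    #{w : ι → Bool | #{i | w i} = k} = (Fintype.card ι).choose k := by
  rw [← card_univ, ← card_powersetCard]
  refine card_nbij' (fun w => ({i | w i} : Finset ι)) (fun s i => decide (i ∈ s)) ?_ ?_ ?_ ?_
    <;> intro _ <;> simp

lemma pi_bernoulliMeasure_real_finset [DecidableEq ι] (W : Finset (ι → Bool)) :
    (Measure.pi fun _ : ι => Ber(true, false, p)).real W =
      ∑ k ∈ range (Fintype.card ι + 1),
        #{w ∈ W | #{i | w i} = k} * ((p : ℝ) ^ k * (1 - p) ^ (Fintype.card ι - k)) := by
  have hweight (w : ι → Bool) : ∏ i, (if w i then (p : ℝ) else 1 - p) =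
      p ^ #{i | w i} * (1 - p) ^ (Fintype.card ι - #{i | w i}) := by
    have hcard := card_filter_add_card_filter_not (s := univ) fun i => w i = true
    simp only [Bool.not_eq_true, card_univ] at hcard
    rw [prod_ite_bool, ← hcard, Nat.add_sub_cancel_left]
  rw [← sum_measureReal_singleton, ← sum_fiberwise_of_maps_to (g := fun w => #{i | w i})
    (t := range (Fintype.card ι + 1)) fun w _ => mem_range_succ_iff.mpr (card_le_univ _)]
  refine sum_congr rfl fun k _ => ?_
  rw [← nsmul_eq_mul, ← sum_const]
  refine sum_congr rfl fun w hw => ?_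
  rw [pi_bernoulliMeasure_real_singleton, hweight, (mem_filter.mp hw).2]

lemma exists_isPartitionPolynomial_pi_bernoulliMeasure_real_eq (W : Set (ι → Bool)) :
    ∃ P : ℤ[X], IsPartitionPolynomial P ∧
      (Measure.pi fun _ : ι => Ber(true, false, p)).real W = aeval (p : ℝ) P := by
  classical
  lift W to Finset (ι → Bool) using W.toFinite
  set n := Fintype.card ι
  refine ⟨∑ k ∈ range (n + 1), C (#{w ∈ W | #{i | w i} = k} : ℤ) * X ^ k * (1 - X) ^ (n - k),
    ⟨n, _, fun k _ => ⟨Nat.cast_nonneg _, ?_⟩, rfl⟩, ?_⟩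
  · rw [← card_filter_card_true_eq_choose]
    exact_mod_cast card_le_card (filter_subset_filter _ (subset_univ W))
  · rw [pi_bernoulliMeasure_real_finset, aeval_sum_C_mul_X_pow_mul_one_sub_X_pow]
    push_cast
    rfl

end Words

lemma exists_pi_bernoulliMeasure_real_eq_aeval (p : I) {P : ℤ[X]}
    (hP : IsPartitionPolynomial P) : ∃ (n : ℕ) (W : Set (Fin n → Bool)),
      (Measure.pi fun _ : Fin n => Ber(true, false, p)).real W = aeval (p : ℝ) P := by
  obtain ⟨n, a, ha, rfl⟩ := hP
  have hchoose (k : ℕ) : ∃ V ⊆ ({w | #{i | w i} = k} : Finset (Fin n → Bool)),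
      k ≤ n → #V = (a k).toNat := by
    by_cases hk : k ≤ n
    · have hak := ha k hk
      obtain ⟨V, hV, hcard⟩ := exists_subset_card_eq (n := (a k).toNat)
        (s := ({w | #{i | w i} = k} : Finset (Fin n → Bool)))
        (by rw [card_filter_card_true_eq_choose, Fintype.card_fin]; omega)
      exact ⟨V, hV, fun _ => hcard⟩
    · exact ⟨∅, empty_subset _, fun h => absurd h hk⟩
  choose V hV hcard using hchoose
  have hfiber : ∀ k ∈ range (n + 1),
      {w ∈ (range (n + 1)).biUnion V | #{i | w i} = k} = V k := by
    intro k hk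
    ext w
    simp only [mem_filter, mem_biUnion]
    constructor
    · rintro ⟨⟨j, -, hw⟩, rfl⟩
      rwa [(mem_filter.mp (hV j hw)).2]
    · intro hw
      exact ⟨⟨k, hk, hw⟩, (mem_filter.mp (hV k hw)).2⟩
  refine ⟨n, (range (n + 1)).biUnion V, ?_⟩
  rw [pi_bernoulliMeasure_real_finset, aeval_sum_C_mul_X_pow_mul_one_sub_X_pow, Fintype.card_fin]
  refine sum_congr rfl fun k hk => ?_
  have hkn : k ≤ n := mem_range_succ_iff.mp hk
  rw [hfiber k hk, hcard k hkn]
  congr 1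
  exact_mod_cast Int.toNat_of_nonneg (ha k hkn).1

lemma IsBernoulli.eq_infinitePi {r : ℝ} (hr : r ∈ Set.Icc (0 : ℝ) 1) {μ : Measure (ℕ → Bool)}
    (hμ : IsBernoulli r μ) : μ = infinitePi fun _ : ℕ => Ber(true, false, ⟨r, hr⟩) := by
  refine IsProjectiveLimit.unique (fun J => ?_) (isProjectiveLimit_infinitePi _)
  refine ext_iff_singleton.mpr fun w => ?_
  classical
  let e : ℕ → Bool := fun i => if h : i ∈ J then w ⟨i, h⟩ else false
  have hcyl : J.restrict ⁻¹' ({w} : Set (J → Bool)) = {x | ∀ i ∈ J, x i = e i} := by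
    ext x
    simp +contextual [e, funext_iff]
  rw [map_apply (by fun_prop) (measurableSet_singleton w), hcyl, hμ, ← prod_ite_bool,
    ← ofReal_measureReal, pi_bernoulliMeasure_real_singleton, ← prod_coe_sort]
  simp [e]

lemma IsCompact.exists_cylinder_subset_of_isOpen {E : ℕ → Type*}
    [∀ n, TopologicalSpace (E n)] [∀ n, DiscreteTopology (E n)] {V : Set (∀ n, E n)}
    (hc : IsCompact V) (ho : IsOpen V) : ∃ N, ∀ x ∈ V, PiNat.cylinder x N ⊆ V := by
  have hloc (x : ∀ n, E n) : ∃ n, x ∈ V → PiNat.cylinder x n ⊆ V := by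
    by_cases hx : x ∈ V
    · obtain ⟨_, ⟨y, n, rfl⟩, hxy, hsub⟩ :=
        (PiNat.isTopologicalBasis_cylinders E).exists_subset_of_mem_open hx ho
      exact ⟨n, fun _ => (PiNat.mem_cylinder_iff_eq.mp hxy).symm ▸ hsub⟩
    · exact ⟨0, fun h => absurd h hx⟩
  choose n hn using hloc
  obtain ⟨t, htV, hcover⟩ := hc.elim_nhds_subcover (fun x => PiNat.cylinder x (n x))
    fun x _ => (PiNat.isOpen_cylinder E x (n x)).mem_nhds (PiNat.self_mem_cylinder x _)
  refine ⟨t.sup n, fun x hx y hy => ?_⟩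
  obtain ⟨z, hzt, hxz⟩ := Set.mem_iUnion₂.mp (hcover hx)
  have hzx : PiNat.cylinder x (n z) = PiNat.cylinder z (n z) := PiNat.mem_cylinder_iff_eq.mp hxz
  exact hn z (htV z hzt) (hzx ▸ PiNat.cylinder_anti x (le_sup hzt) hy)

lemma IsClopen.exists_isPartitionPolynomial_infinitePi_real_eq (p : I) {V : Set (ℕ → Bool)}
    (hV : IsClopen V) : ∃ P : ℤ[X], IsPartitionPolynomial P ∧
      (infinitePi fun _ : ℕ => Ber(true, false, p)).real V = aeval (p : ℝ) P := by
  obtain ⟨N, hN⟩ := hV.isClosed.isCompact.exists_cylinder_subset_of_isOpen hV.isOpen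
  have hcyl : V = (range N).restrict ⁻¹' ((range N).restrict '' V) := by
    refine (Set.subset_preimage_image _ _).antisymm ?_
    rintro y ⟨x, hx, hxy⟩
    exact hN x hx (PiNat.mem_cylinder_iff.mpr fun i hi =>
      (congr_fun hxy ⟨i, mem_range.mpr hi⟩).symm)
  obtain ⟨P, hP, hW⟩ := exists_isPartitionPolynomial_pi_bernoulliMeasure_real_eq p
    ((range N).restrict '' V)
  refine ⟨P, hP, ?_⟩
  rw [hcyl, ← map_measureReal_apply (by fun_prop) (Set.toFinite _).measurableSet,
    infinitePi_map_restrict, hW]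

def blocks {α : Type*} (n : ℕ) (x : ℕ → α) : ℕ → Fin n → α := fun k j => x (k * n + j)

lemma continuous_blocks {α : Type*} [TopologicalSpace α] (n : ℕ) :
    Continuous (blocks (α := α) n) := by
  unfold blocks
  fun_prop

lemma infinitePi_map_blocks {α : Type*} [MeasurableSpace α] (m : Measure α)
    [IsProbabilityMeasure m] (n : ℕ) :
    (infinitePi fun _ : ℕ => m).map (blocks n) =
      infinitePi fun _ : ℕ => Measure.pi fun _ : Fin n => m := by
  cases n with
  | zero =>
    have : IsProbabilityMeasure ((infinitePi fun _ : ℕ => m).map (blocks 0)) :=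
      isProbabilityMeasure_map aemeasurable_of_subsingleton_codomain
    ext s -
    rcases s.eq_empty_or_nonempty with rfl | hs
    · simp
    · simp [hs.eq_univ]
  | succ n =>
    have hblocks : blocks (α := α) (n + 1) =
        MeasurableEquiv.curry ℕ (Fin (n + 1)) α ∘
          MeasurableEquiv.piCongrLeft (fun _ => α) (Nat.divModEquiv (n + 1)) := by
      ext x k j
      simp [blocks, MeasurableEquiv.coe_piCongrLeft, Equiv.piCongrLeft_apply_eq_cast]
    rw [hblocks, ← Measure.map_map (by fun_prop) (by fun_prop),
      infinitePi_map_piCongrLeft (fun _ => m)]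
    exact (infinitePi_map_curry fun _ _ => m).trans (by simp_rw [infinitePi_eq_pi])

lemma exists_isPartitionPolynomial_of_continuous_map (p q : I) {f : (ℕ → Bool) → ℕ → Bool}
    (hf : Continuous f)
    (hmap : infinitePi (fun _ : ℕ => Ber(true, false, q)) =
      (infinitePi fun _ : ℕ => Ber(true, false, p)).map f) :
    ∃ P : ℤ[X], IsPartitionPolynomial P ∧ aeval (p : ℝ) P = q := by
  let head : Set (ℕ → Bool) := (fun x => x 0) ⁻¹' {true}
  have hhead : MeasurableSet head := measurable_pi_apply 0 (measurableSet_singleton _)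
  have hclopen : IsClopen (f ⁻¹' head) :=
    ((isClopen_discrete _).preimage (continuous_apply 0)).preimage hf
  obtain ⟨P, hP, hV⟩ := hclopen.exists_isPartitionPolynomial_infinitePi_real_eq p
  refine ⟨P, hP, ?_⟩
  rw [← hV, ← map_measureReal_apply hf.measurable hhead, ← hmap,
    ← map_measureReal_apply (measurable_pi_apply 0) (measurableSet_singleton _),
    infinitePi_map_eval, bernoulliMeasure_real_singleton_bool]
  rfl

lemma exists_continuous_map_of_isPartitionPolynomial (p q : I) {P : ℤ[X]}
    (hP : IsPartitionPolynomial P) (hPq : aeval (p : ℝ) P = q) :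
    ∃ f : (ℕ → Bool) → ℕ → Bool, Continuous f ∧
      infinitePi (fun _ : ℕ => Ber(true, false, q)) =
        (infinitePi fun _ : ℕ => Ber(true, false, p)).map f := by
  classical
  obtain ⟨n, W, hW⟩ := exists_pi_bernoulliMeasure_real_eq_aeval p hP
  let g : (Fin n → Bool) → Bool := fun w => decide (w ∈ W)
  have hg : (Measure.pi fun _ : Fin n => Ber(true, false, p)).map g = Ber(true, false, q) := by
    have := isProbabilityMeasure_map (μ := Measure.pi fun _ : Fin n => Ber(true, false, p))
      (f := g) (by fun_prop)
    refine eq_bernoulliMeasure_of_measureReal_true q _ ?_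
    have hpre : g ⁻¹' {true} = W := by
      ext w
      simp [g]
    rw [map_measureReal_apply (by fun_prop) (measurableSet_singleton _), hpre, hW, hPq]
  refine ⟨(fun (y : ℕ → Fin n → Bool) k => g (y k)) ∘ blocks n,
    (continuous_pi fun k => (continuous_of_discreteTopology (f := g)).comp
      (continuous_apply k)).comp (continuous_blocks n), ?_⟩
  rw [← Measure.map_map (by fun_prop) (by unfold blocks; fun_prop), infinitePi_map_blocks,
    infinitePi_map_pi _ fun _ => by fun_prop, hg]

/-- For `r, s ∈ [0,1]`, `μ_s` is a continuous image of `μ_r`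
iff `s` is binomially reducible to `r`. -/
theorem continuous_image_iff_binomially_reducible
    (r s : ℝ) (hr : r ∈ Set.Icc (0 : ℝ) 1) (hs : s ∈ Set.Icc (0 : ℝ) 1)
    (μ ν : Measure (ℕ → Bool)) (hμ : IsBernoulli r μ) (hν : IsBernoulli s ν) :
    (∃ f : (ℕ → Bool) → (ℕ → Bool), Continuous f ∧ ν = μ.map f) ↔
      ∃ P : Polynomial ℤ, IsPartitionPolynomial P ∧ aeval r P = s := by
  rw [hμ.eq_infinitePi hr, hν.eq_infinitePi hs]
  constructor
  · rintro ⟨f, hf, hmap⟩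
    exact exists_isPartitionPolynomial_of_continuous_map ⟨r, hr⟩ ⟨s, hs⟩ hf hmap
  · rintro ⟨P, hP, hPs⟩
    exact exists_continuous_map_of_isPartitionPolynomial ⟨r, hr⟩ ⟨s, hs⟩ hP hPs
end

section
/- Binomial reducibility is a reflexive and transitive relation on [0,1]; consequently, binomial equivalence (each of two numbers being binomially reducible to the other) is an equivalence relation on [0,1]. -/
open MeasureTheory Polynomial

noncomputable def Bp (n : ℕ) (a : ℕ → ℤ) : Polynomial ℤ :=
  ∑ i ∈ Finset.range (n + 1), C (a i) * X ^ i * (1 - X) ^ (n - i)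

lemma Bp_congr {n : ℕ} {a b : ℕ → ℤ} (h : ∀ i ≤ n, a i = b i) : Bp n a = Bp n b := by
  unfold Bp
  refine Finset.sum_congr rfl fun i hi => ?_
  rw [h i (Nat.lt_succ_iff.mp (Finset.mem_range.mp hi))]

lemma Bp_add (n : ℕ) (a b : ℕ → ℤ) : Bp n a + Bp n b = Bp n (fun i => a i + b i) := by
  unfold Bp
  rw [← Finset.sum_add_distrib]
  refine Finset.sum_congr rfl fun i hi => ?_
  rw [C_add]; ring

lemma Bp_one (n : ℕ) : Bp n (fun i => (n.choose i : ℤ)) = 1 := by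
  have h := add_pow (X : Polynomial ℤ) (1 - X) n
  simp only [add_sub_cancel, one_pow] at h
  unfold Bp
  conv_rhs => rw [h]
  refine Finset.sum_congr rfl fun i hi => ?_
  simp only [C_eq_natCast]
  push_cast
  ring

lemma vandermonde_range (n m i : ℕ) :
    ∑ k ∈ Finset.range (i + 1), ((n.choose k : ℤ) * (m.choose (i - k) : ℤ))
      = ((n + m).choose i : ℤ) := by
  rw [Nat.add_choose_eq, Finset.Nat.sum_antidiagonal_eq_sum_range_succ_mk]
  push_cast
  rfl

lemma Bp_mul (n m : ℕ) (a c : ℕ → ℤ) (ha : ∀ k, n < k → a k = 0)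
    (hc : ∀ k, m < k → c k = 0) :
    Bp n a * Bp m c
      = Bp (n + m) (fun i => ∑ k ∈ Finset.range (i + 1), a k * c (i - k)) := by
  set N := n + m with hN
  set G : ℕ × ℕ → Polynomial ℤ :=
    fun p => C (a p.1 * c p.2) * X ^ (p.1 + p.2) * (1 - X) ^ (N - (p.1 + p.2)) with hG
  have hLHS : Bp n a * Bp m c
      = ∑ p ∈ Finset.range (n + 1) ×ˢ Finset.range (m + 1), G p := by
    unfold Bp
    rw [Finset.sum_mul_sum, ← Finset.sum_product']
    refine Finset.sum_congr rfl fun p hp => ?_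
    simp only [Finset.mem_product, Finset.mem_range] at hp
    have h1 : (n - p.1) + (m - p.2) = N - (p.1 + p.2) := by omega
    rw [hG]
    simp only
    rw [← h1, C_mul, pow_add, pow_add]
    ring
  have hsq : ∑ p ∈ Finset.range (n + 1) ×ˢ Finset.range (m + 1), G p
      = ∑ p ∈ Finset.range (N + 1) ×ˢ Finset.range (N + 1), G p := by
    refine Finset.sum_subset ?_ ?_
    · intro p hp
      simp only [Finset.mem_product, Finset.mem_range] at hp ⊢
      omega
    · intro p hp hnp
      simp only [Finset.mem_product, Finset.mem_range] at hp hnp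
      have : a p.1 = 0 ∨ c p.2 = 0 := by
        rcases Nat.lt_or_ge n p.1 with h | h
        · exact Or.inl (ha _ h)
        · exact Or.inr (hc _ (by omega))
      rcases this with h | h <;> simp [hG, h]
  have hRHS : Bp N (fun i => ∑ k ∈ Finset.range (i + 1), a k * c (i - k))
      = ∑ q ∈ (Finset.range (N + 1)).sigma (fun s => Finset.range (s + 1)),
          G (q.2, q.1 - q.2) := by
    unfold Bp
    rw [Finset.sum_sigma]
    refine Finset.sum_congr rfl fun s hs => ?_
    simp only
    rw [map_sum, Finset.sum_mul, Finset.sum_mul]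
    refine Finset.sum_congr rfl fun k hk => ?_
    simp only [Finset.mem_range] at hk
    have h2 : k + (s - k) = s := by omega
    rw [hG]
    simp only [h2]
  rw [hLHS, hsq, hRHS]
  -- reduce square to triangle
  have htri : ∑ p ∈ Finset.range (N + 1) ×ˢ Finset.range (N + 1), G p
      = ∑ p ∈ (Finset.range (N + 1) ×ˢ Finset.range (N + 1)).filter
          (fun p => p.1 + p.2 ≤ N), G p := by
    refine (Finset.sum_subset (Finset.filter_subset _ _) ?_).symm
    intro p hp hnp
    simp only [Finset.mem_filter, Finset.mem_product, Finset.mem_range] at hp hnp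
    have : a p.1 = 0 ∨ c p.2 = 0 := by
      by_contra h
      push_neg at h
      have h1 : p.1 ≤ n := by by_contra hh; exact h.1 (ha _ (by omega))
      have h2 : p.2 ≤ m := by by_contra hh; exact h.2 (hc _ (by omega))
      exact hnp ⟨hp, by omega⟩
    rcases this with h | h <;> simp [hG, h]
  rw [htri]
  refine (Finset.sum_nbij' (fun q => (q.2, q.1 - q.2)) (fun p => ⟨p.1 + p.2, p.1⟩)
    ?_ ?_ ?_ ?_ ?_).symm
  · intro q hq
    simp only [Finset.mem_sigma, Finset.mem_range] at hq
    simp only [Finset.mem_filter, Finset.mem_product, Finset.mem_range]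
    omega
  · intro p hp
    simp only [Finset.mem_filter, Finset.mem_product, Finset.mem_range] at hp
    simp only [Finset.mem_sigma, Finset.mem_range]
    omega
  · intro q hq
    simp only [Finset.mem_sigma, Finset.mem_range] at hq
    have : q.2 + (q.1 - q.2) = q.1 := by omega
    simp [this]
  · intro p hp
    simp
  · intro q hq
    rfl

lemma X_mul_Bp (m : ℕ) (c : ℕ → ℤ) :
    X * Bp m c = Bp (m + 1) (fun i => if i = 0 then 0 else c (i - 1)) := by
  unfold Bp
  rw [Finset.sum_range_succ' (fun i => C (if i = 0 then (0:ℤ) else c (i - 1)) * X ^ i *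
    (1 - X) ^ (m + 1 - i)) (m + 1)]
  simp only [Nat.add_sub_cancel, if_true, eq_self_iff_true, map_zero, zero_mul, add_zero, reduceIte]
  rw [Finset.mul_sum]
  apply Finset.sum_congr rfl
  intro i hi
  simp only [Finset.mem_range] at hi
  have h1 : m + 1 - (i + 1) = m - i := by omega
  rw [h1, if_neg (Nat.succ_ne_zero i)]
  ring

lemma one_sub_X_mul_Bp (m : ℕ) (d : ℕ → ℤ) (hd : d (m + 1) = 0) :
    (1 - X) * Bp m d = Bp (m + 1) d := by
  unfold Bp
  rw [Finset.sum_range_succ (fun i => C (d i) * X ^ i * (1 - X) ^ (m + 1 - i)), hd]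
  simp only [map_zero, zero_mul, add_zero]
  rw [Finset.mul_sum]
  refine Finset.sum_congr rfl fun i hi => ?_
  simp only [Finset.mem_range] at hi
  have : m + 1 - i = (m - i) + 1 := by omega
  rw [this, pow_succ]
  ring

lemma Bp_comp : ∀ (m : ℕ) (b : ℕ → ℤ), (∀ j, 0 ≤ b j ∧ b j ≤ (m.choose j : ℤ)) →
    ∀ (n : ℕ) (a : ℕ → ℤ), (∀ k, 0 ≤ a k ∧ a k ≤ (n.choose k : ℤ)) →
    ∃ e : ℕ → ℤ, (∀ i, 0 ≤ e i ∧ e i ≤ ((n * m).choose i : ℤ)) ∧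
      (Bp m b).comp (Bp n a) = Bp (n * m) e := by
  intro m
  induction m with
  | zero =>
    intro b hb n a _
    refine ⟨fun i => if i = 0 then b 0 else 0, fun i => ?_, ?_⟩
    · by_cases h : i = 0
      · subst h; simpa using hb 0
      · have h0 : (n * 0).choose i = 0 := by
          rw [Nat.mul_zero]; exact Nat.choose_eq_zero_of_lt (by omega)
        simp [h, h0]
    · simp [Bp, Nat.mul_zero]
  | succ m ih =>
    intro b hb n a haa
    have ha0 : ∀ k, n < k → a k = 0 := fun k hk => le_antisymm
      (by simpa [Nat.choose_eq_zero_of_lt hk] using (haa k).2) (haa k).1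
    set d : ℕ → ℤ := fun j => if j ≤ m then min (b j) (m.choose j : ℤ) else 0 with hdDef
    set c : ℕ → ℤ := fun j => b (j + 1) - d (j + 1) with hcDef
    have hd : ∀ j, 0 ≤ d j ∧ d j ≤ (m.choose j : ℤ) := by
      intro j
      rcases le_or_gt j m with h | h
      · simp only [hdDef, if_pos h]
        exact ⟨le_min (hb j).1 (by positivity), min_le_right _ _⟩
      · simp only [hdDef, if_neg (Nat.not_le.mpr h)]
        exact ⟨le_refl 0, by positivity⟩
    have hc : ∀ j, 0 ≤ c j ∧ c j ≤ (m.choose j : ℤ) := by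
      intro j
      have hbj := hb (j + 1)
      have hpascal : ((m + 1).choose (j + 1) : ℤ)
          = (m.choose j : ℤ) + (m.choose (j + 1) : ℤ) := by
        rw [Nat.choose_succ_succ]; push_cast; ring
      rcases le_or_gt (j + 1) m with h | h
      · simp only [hcDef, hdDef, if_pos h]
        constructor
        · simp only [sub_nonneg]; exact min_le_left _ _
        · rcases min_cases (b (j + 1)) ((m.choose (j + 1) : ℤ)) with ⟨heq, _⟩ | ⟨heq, _⟩ <;>
            rw [heq]
          · simpa using (hb (j + 1)).1
          · linarith [hbj.2]
      · have hdj : d (j + 1) = 0 := by simp [hdDef, Nat.not_le.mpr h]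
        simp only [hcDef, hdj, sub_zero]
        rcases eq_or_lt_of_le (Nat.succ_le_of_lt h) with h' | h'
        · have hj : j = m := by omega
          subst hj
          refine ⟨hbj.1, ?_⟩
          rw [Nat.choose_self, Nat.cast_one]
          simpa using hbj.2
        · have hj : m + 1 < j + 1 := h'
          have hz : b (j + 1) = 0 := le_antisymm
            (by simpa [Nat.choose_eq_zero_of_lt hj] using hbj.2) hbj.1
          rw [hz]
          exact ⟨le_refl 0, by positivity⟩
    have hsplit : Bp (m + 1) b = X * Bp m c + (1 - X) * Bp m d := by
      rw [X_mul_Bp, one_sub_X_mul_Bp m d (by simp [hdDef]), Bp_add]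
      refine Bp_congr fun i hi => ?_
      rcases eq_or_ne i 0 with h | h
      · subst h
        have hb0 := hb 0
        simp only [Nat.choose_zero_right, Nat.cast_one] at hb0
        simp [hdDef, Nat.zero_le, min_eq_left hb0.2]
      · simp only [if_neg h, hcDef]
        have hii : i - 1 + 1 = i := by omega
        rw [hii]; ring
    obtain ⟨e₁, he₁, hE₁⟩ := ih c hc n a haa
    obtain ⟨e₂, he₂, hE₂⟩ := ih d hd n a haa
    set g : ℕ → ℤ := fun k => (n.choose k : ℤ) - a k with hgDef
    have hg : ∀ k, 0 ≤ g k ∧ g k ≤ (n.choose k : ℤ) := fun k =>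
      ⟨by simp only [hgDef, sub_nonneg]; exact (haa k).2,
       by simp only [hgDef]; linarith [(haa k).1]⟩
    have hone : (1 : Polynomial ℤ) - Bp n a = Bp n g := by
      have hh := Bp_add n g a
      have h2 : Bp n (fun i => g i + a i) = Bp n (fun i => (n.choose i : ℤ)) :=
        Bp_congr (fun i _ => by simp [hgDef])
      rw [h2, Bp_one] at hh
      linear_combination -hh
    have he₁0 : ∀ k, n * m < k → e₁ k = 0 := fun k hk => le_antisymm
      (by simpa [Nat.choose_eq_zero_of_lt hk] using (he₁ k).2) (he₁ k).1
    have he₂0 : ∀ k, n * m < k → e₂ k = 0 := fun k hk => le_antisymm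
      (by simpa [Nat.choose_eq_zero_of_lt hk] using (he₂ k).2) (he₂ k).1
    have hg0 : ∀ k, n < k → g k = 0 := fun k hk => le_antisymm
      (by simpa [Nat.choose_eq_zero_of_lt hk] using (hg k).2) (hg k).1
    have hcomp : (Bp (m + 1) b).comp (Bp n a)
        = Bp n a * Bp (n * m) e₁ + Bp n g * Bp (n * m) e₂ := by
      rw [hsplit]
      simp only [add_comp, mul_comp, X_comp, sub_comp, one_comp, hE₁, hE₂, hone]
    rw [Bp_mul n (n * m) a e₁ ha0 he₁0, Bp_mul n (n * m) g e₂ hg0 he₂0, Bp_add] at hcomp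
    set e : ℕ → ℤ := fun i =>
      (∑ k ∈ Finset.range (i + 1), a k * e₁ (i - k)) +
      (∑ k ∈ Finset.range (i + 1), g k * e₂ (i - k)) with heDef
    have hNN : n + n * m = n * (m + 1) := by ring
    refine ⟨e, fun i => ?_, by rw [hcomp, ← hNN]⟩
    constructor
    · refine add_nonneg ?_ ?_
      · exact Finset.sum_nonneg fun k _ => mul_nonneg (haa k).1 (he₁ _).1
      · exact Finset.sum_nonneg fun k _ => mul_nonneg (hg k).1 (he₂ _).1
    · have h1 : ∑ k ∈ Finset.range (i + 1), a k * e₁ (i - k)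
          ≤ ∑ k ∈ Finset.range (i + 1), a k * ((n * m).choose (i - k) : ℤ) :=
        Finset.sum_le_sum fun k _ => mul_le_mul_of_nonneg_left (he₁ _).2 (haa k).1
      have h2 : ∑ k ∈ Finset.range (i + 1), g k * e₂ (i - k)
          ≤ ∑ k ∈ Finset.range (i + 1), g k * ((n * m).choose (i - k) : ℤ) :=
        Finset.sum_le_sum fun k _ => mul_le_mul_of_nonneg_left (he₂ _).2 (hg k).1
      have h3 : (∑ k ∈ Finset.range (i + 1), a k * ((n * m).choose (i - k) : ℤ))
          + (∑ k ∈ Finset.range (i + 1), g k * ((n * m).choose (i - k) : ℤ))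
          = ∑ k ∈ Finset.range (i + 1), ((n.choose k : ℤ) * ((n * m).choose (i - k) : ℤ)) := by
        rw [← Finset.sum_add_distrib]
        refine Finset.sum_congr rfl fun k _ => ?_
        simp only [hgDef]; ring
      have h4 := vandermonde_range n (n * m) i
      rw [hNN] at h4
      calc e i ≤ _ := add_le_add h1 h2
        _ = _ := h3
        _ = _ := h4

/-- `s` is binomially reducible to `r`. -/
def BinRed (s r : ℝ) : Prop :=
  ∃ P : Polynomial ℤ, IsPartitionPolynomial P ∧ aeval r P = s

/-- `r` and `s` are binomially equivalent. -/
def BinEquiv (r s : ℝ) : Prop := BinRed s r ∧ BinRed r s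

lemma isPartition_iff_Bp (P : Polynomial ℤ) :
    IsPartitionPolynomial P ↔
      ∃ (n : ℕ) (a : ℕ → ℤ), (∀ i, 0 ≤ a i ∧ a i ≤ (n.choose i : ℤ)) ∧ P = Bp n a := by
  constructor
  · rintro ⟨n, a, ha, rfl⟩
    refine ⟨n, fun i => if i ≤ n then a i else 0, fun i => ?_, ?_⟩
    · by_cases h : i ≤ n
      · simpa [h] using ha i h
      · simp only [if_neg h]
        exact ⟨le_refl 0, by positivity⟩
    · exact (Bp_congr fun i hi => by simp [hi]).symm
  · rintro ⟨n, a, ha, rfl⟩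
    exact ⟨n, a, fun i _ => ha i, rfl⟩

lemma isPartition_comp {P Q : Polynomial ℤ} (hP : IsPartitionPolynomial P)
    (hQ : IsPartitionPolynomial Q) : IsPartitionPolynomial (Q.comp P) := by
  rw [isPartition_iff_Bp] at hP hQ ⊢
  obtain ⟨n, a, ha, rfl⟩ := hP
  obtain ⟨m, b, hb, rfl⟩ := hQ
  obtain ⟨e, he, hE⟩ := Bp_comp m b hb n a ha
  exact ⟨n * m, e, he, hE⟩

lemma isPartition_X : IsPartitionPolynomial (X : Polynomial ℤ) := by
  refine ⟨1, fun i => (i : ℤ), ?_, ?_⟩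
  · intro i hi
    interval_cases i <;> simp
  · simp [Finset.sum_range_succ]

/-- binomial reducibility is reflexive and transitive on `[0,1]`;
consequently binomial equivalence is an equivalence relation on `[0,1]`. -/
theorem binRed_refl_trans_and_binEquiv_equivalence :
    (∀ r ∈ Set.Icc (0 : ℝ) 1, BinRed r r) ∧
    (∀ r ∈ Set.Icc (0 : ℝ) 1, ∀ s ∈ Set.Icc (0 : ℝ) 1, ∀ t ∈ Set.Icc (0 : ℝ) 1,
      BinRed s r → BinRed t s → BinRed t r) ∧
    (∀ r ∈ Set.Icc (0 : ℝ) 1, BinEquiv r r) ∧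
    (∀ r ∈ Set.Icc (0 : ℝ) 1, ∀ s ∈ Set.Icc (0 : ℝ) 1, BinEquiv r s → BinEquiv s r) ∧
    (∀ r ∈ Set.Icc (0 : ℝ) 1, ∀ s ∈ Set.Icc (0 : ℝ) 1, ∀ t ∈ Set.Icc (0 : ℝ) 1,
      BinEquiv r s → BinEquiv s t → BinEquiv r t) := by
  have hrefl : ∀ r ∈ Set.Icc (0 : ℝ) 1, BinRed r r := by
    intro r _
    exact ⟨X, isPartition_X, by simp⟩
  have htrans : ∀ r ∈ Set.Icc (0 : ℝ) 1, ∀ s ∈ Set.Icc (0 : ℝ) 1, ∀ t ∈ Set.Icc (0 : ℝ) 1,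
      BinRed s r → BinRed t s → BinRed t r := by
    rintro r _ s _ t _ ⟨P, hP, hPr⟩ ⟨Q, hQ, hQs⟩
    exact ⟨Q.comp P, isPartition_comp hP hQ, by rw [aeval_comp, hPr, hQs]⟩
  refine ⟨hrefl, htrans, ?_, ?_, ?_⟩
  · intro r hr
    exact ⟨hrefl r hr, hrefl r hr⟩
  · rintro r _ s _ ⟨h1, h2⟩
    exact ⟨h2, h1⟩
  · rintro r hr s hs t ht ⟨h1, h2⟩ ⟨h3, h4⟩
    exact ⟨htrans r hr s hs t ht h1 h3, htrans t ht s hs r hr h4 h2⟩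
end

section
/- For every clopen subset A of the Cantor set Ω = {0,1}^ℕ there exists a partition polynomial P such that μ_r(A) = P(r) for all r ∈ [0,1]. -/
open MeasureTheory Polynomial

/-!
A clopen subset of `ℕ → Bool` is compact and open, hence a finite union of cylinders, so it is
determined by the first `N` coordinates: it is the disjoint union of the fibres of
`x ↦ {i < N | x i = true}` over some family `S` of subsets of `{0, …, N - 1}`. The fibre over
`s` is a cylinder of measure `r ^ #s * (1 - r) ^ (N - #s)`, and grouping the `s ∈ S` by
cardinality gives coefficients `a k ≤ #{s ⊆ {0, …, N - 1} | #s = k} = N.choose k`.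
-/

open Finset PiNat

namespace PiNat

variable {E : ℕ → Type*} [∀ n, TopologicalSpace (E n)] [∀ n, DiscreteTopology (E n)]
  {A : Set (∀ n, E n)}

theorem exists_cylinder_subset_of_isOpen (hA : IsOpen A) {x : ∀ n, E n} (hx : x ∈ A) :
    ∃ n, cylinder x n ⊆ A := by
  obtain ⟨_, ⟨y, n, rfl⟩, hxy, hsub⟩ :=
    (isTopologicalBasis_cylinders E).exists_subset_of_mem_open hx hA
  exact ⟨n, (mem_cylinder_iff_eq.1 hxy).trans_subset hsub⟩

theorem _root_.IsCompact.exists_cylinder_subset (hc : IsCompact A) (ho : IsOpen A) :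
    ∃ N, ∀ x ∈ A, cylinder x N ⊆ A := by
  choose! n hn using fun x (hx : x ∈ A) => exists_cylinder_subset_of_isOpen ho hx
  obtain ⟨t, htA, hcover⟩ := hc.elim_nhds_subcover (fun x => cylinder x (n x))
    fun x _ => (isOpen_cylinder E x _).mem_nhds (self_mem_cylinder x _)
  refine ⟨t.sup n, fun x hx y hy => ?_⟩
  obtain ⟨z, hzt, hxz⟩ := Set.mem_iUnion₂.1 (hcover hx)
  refine hn z (htA z hzt) ?_
  rw [← mem_cylinder_iff_eq.1 hxz]
  exact cylinder_anti x (le_sup hzt) hy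

theorem measurableSet_cylinder {E : ℕ → Type*} [∀ n, MeasurableSpace (E n)]
    [∀ n, MeasurableSingletonClass (E n)] (x : ∀ n, E n) (n : ℕ) :
    MeasurableSet (cylinder x n) := by
  rw [cylinder_eq_pi]
  exact .pi (range n).countable_toSet fun _ _ => measurableSet_singleton _

end PiNat

theorem isPartitionPolynomial_sum_X_pow_mul_one_sub_X_pow {α : Type*} {t : Finset α}
    {S : Finset (Finset α)} (hS : ∀ s ∈ S, s ⊆ t) :
    IsPartitionPolynomial (∑ s ∈ S, X ^ #s * (1 - X) ^ (#t - #s)) := by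
  refine ⟨#t, fun k => #{s ∈ S | #s = k}, fun k _ => ⟨by positivity, ?_⟩, ?_⟩
  · have hsub : {s ∈ S | #s = k} ⊆ powersetCard k t := fun s hs => by
      rw [mem_filter] at hs
      exact mem_powersetCard.2 ⟨hS s hs.1, hs.2⟩
    exact Nat.cast_le.2 ((card_le_card hsub).trans (card_powersetCard k t).le)
  · have hmaps : ∀ s ∈ S, #s ∈ range (#t + 1) := fun s hs =>
      mem_range_succ_iff.2 (card_le_card (hS s hs))
    rw [← sum_fiberwise_of_maps_to hmaps]
    refine sum_congr rfl fun k _ => ?_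
    rw [sum_congr rfl fun s hs => by rw [(mem_filter.1 hs).2], sum_const, nsmul_eq_mul,
      ← C_eq_natCast, mul_assoc]

def trueSet (n : ℕ) (x : ℕ → Bool) : Finset ℕ := {i ∈ range n | x i = true}

theorem trueSet_eq_trueSet_iff {n : ℕ} {x y : ℕ → Bool} :
    trueSet n y = trueSet n x ↔ y ∈ cylinder x n := by
  simp only [trueSet, Finset.ext_iff, mem_filter, mem_range, mem_cylinder_iff]
  refine forall_congr' fun i => ?_
  cases x i <;> cases y i <;> simp

theorem preimage_trueSet_singleton (n : ℕ) (x : ℕ → Bool) :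
    trueSet n ⁻¹' {trueSet n x} = cylinder x n :=
  Set.ext fun _ => trueSet_eq_trueSet_iff

theorem preimage_trueSet_image_eq {n : ℕ} {A : Set (ℕ → Bool)}
    (hA : ∀ x ∈ A, cylinder x n ⊆ A) : trueSet n ⁻¹' (trueSet n '' A) = A := by
  refine (Set.subset_preimage_image _ _).antisymm' ?_
  rintro y ⟨x, hx, hxy⟩
  exact hA x hx (trueSet_eq_trueSet_iff.1 hxy.symm)

theorem trueSet_subset_range (n : ℕ) (x : ℕ → Bool) : trueSet n x ⊆ range n :=
  filter_subset _ _

theorem finite_image_trueSet (n : ℕ) (A : Set (ℕ → Bool)) : (trueSet n '' A).Finite :=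
  (range n).powerset.finite_toSet.subset <| by
    rintro _ ⟨x, -, rfl⟩
    exact mem_powerset.2 (trueSet_subset_range n x)

theorem card_filter_range_eq_false (n : ℕ) (x : ℕ → Bool) :
    #{i ∈ range n | x i = false} = n - #(trueSet n x) := by
  have := card_filter_add_card_filter_not (s := range n) (p := fun i => x i = true)
  simp only [Bool.not_eq_true, card_range] at this
  rw [trueSet]
  omega

variable {r : ℝ} {μ : Measure (ℕ → Bool)}

theorem IsBernoulli.measure_cylinder (hμ : IsBernoulli r μ) (x : ℕ → Bool) (n : ℕ) :
    μ (cylinder x n) = ENNReal.ofReal (r ^ #(trueSet n x) * (1 - r) ^ (n - #(trueSet n x))) := by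
  have hcyl : cylinder x n = {y | ∀ i ∈ range n, y i = x i} := by ext; simp
  rw [hcyl, hμ, card_filter_range_eq_false, trueSet]

theorem IsBernoulli.measure_preimage_trueSet (hμ : IsBernoulli r μ) {n : ℕ}
    {S : Finset (Finset ℕ)} (hS : ↑S ⊆ Set.range (trueSet n)) :
    μ (trueSet n ⁻¹' S) = ∑ s ∈ S, ENNReal.ofReal (r ^ #s * (1 - r) ^ (n - #s)) := by
  rw [← sum_measure_preimage_singleton]
  · refine sum_congr rfl fun s hs => ?_
    obtain ⟨x, rfl⟩ := hS hs
    rw [preimage_trueSet_singleton, hμ.measure_cylinder]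
  · intro s hs
    obtain ⟨x, rfl⟩ := hS hs
    rw [preimage_trueSet_singleton]
    exact measurableSet_cylinder x n

/-- every clopen subset of the Cantor set is represented by a
partition polynomial. -/
theorem exists_partition_polynomial_of_isClopen (A : Set (ℕ → Bool)) (hA : IsClopen A) :
    ∃ P : Polynomial ℤ, IsPartitionPolynomial P ∧
      ∀ r ∈ Set.Icc (0 : ℝ) 1, ∀ μ : Measure (ℕ → Bool), IsBernoulli r μ →
        μ A = ENNReal.ofReal (aeval r P) := by
  obtain ⟨N, hN⟩ := hA.isClosed.isCompact.exists_cylinder_subset hA.isOpen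
  set S := (finite_image_trueSet N A).toFinset
  have hA_eq : trueSet N ⁻¹' S = A := by
    rw [Set.Finite.coe_toFinset, preimage_trueSet_image_eq hN]
  have hS : ↑S ⊆ Set.range (trueSet N) := by
    rw [Set.Finite.coe_toFinset]
    exact Set.image_subset_range _ _
  refine ⟨∑ s ∈ S, X ^ #s * (1 - X) ^ (N - #s), ?_, fun r ⟨hr0, hr1⟩ μ hμ => ?_⟩
  · simpa only [card_range] using isPartitionPolynomial_sum_X_pow_mul_one_sub_X_pow
      (t := range N) (S := S) fun s hs => by
        obtain ⟨x, rfl⟩ := hS hs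
        exact trueSet_subset_range N x
  · rw [← hA_eq, hμ.measure_preimage_trueSet hS, ← ENNReal.ofReal_sum_of_nonneg]
    · simp [map_sum]
    · intro s _
      have : 0 ≤ 1 - r := by linarith
      positivity
end

section
/- For every partition polynomial P there exists a clopen subset A of the Cantor set Ω = {0,1}^ℕ such that μ_r(A) = P(r) for all r ∈ [0,1]. -/
/-!
Realise `P = ∑ aᵢ Xⁱ (1 - X)ⁿ⁻ⁱ` by cylinder sets fixing the first `n` coordinates: the
cylinder whose first `n` bits are the indicator of `s ⊆ {0, …, n-1}` has `μ_r`-measure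
`r^#s (1-r)^(n-#s)`, and since `aᵢ ≤ C(n, i)` we may take the union of the cylinders of `aᵢ`
distinct `i`-element sets for each `i`. Distinct cylinders at the same level are disjoint, so
the measures add up to `P(r)`.
-/

open MeasureTheory Polynomial

open Finset

def bitCylinder (n : ℕ) (s : Finset ℕ) : Set (ℕ → Bool) :=
  {x | ∀ i ∈ range n, x i = decide (i ∈ s)}

lemma bitCylinder_eq_biInter (n : ℕ) (s : Finset ℕ) :
    bitCylinder n s = ⋂ i ∈ range n, (fun x : ℕ → Bool ↦ x i) ⁻¹' {decide (i ∈ s)} := by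
  ext x
  simp [bitCylinder]

lemma isClopen_bitCylinder (n : ℕ) (s : Finset ℕ) : IsClopen (bitCylinder n s) := by
  rw [bitCylinder_eq_biInter]
  exact (range n).finite_toSet.isClopen_biInter fun i _ =>
    (isClopen_discrete _).preimage (continuous_apply i)

lemma measurableSet_bitCylinder (n : ℕ) (s : Finset ℕ) : MeasurableSet (bitCylinder n s) := by
  rw [bitCylinder_eq_biInter]
  exact .biInter (range n).countable_toSet fun i _ =>
    measurable_pi_apply i (measurableSet_singleton _)

lemma filter_range_decide_mem {n : ℕ} {s : Finset ℕ} (hs : s ⊆ range n) :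
    (range n).filter (fun i => decide (i ∈ s) = true) = s := by
  ext i
  simpa using fun hi => hs hi

lemma filter_range_eq_of_mem_bitCylinder {n : ℕ} {s : Finset ℕ} {x : ℕ → Bool}
    (hs : s ⊆ range n) (hx : x ∈ bitCylinder n s) :
    (range n).filter (fun i => x i = true) = s := by
  rw [← filter_range_decide_mem hs]
  exact filter_congr fun i hi => by rw [hx i hi]

lemma pairwiseDisjoint_bitCylinder {n : ℕ} {T : Finset (Finset ℕ)}
    (hT : ∀ s ∈ T, s ⊆ range n) :
    (T : Set (Finset ℕ)).PairwiseDisjoint (bitCylinder n) := by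
  intro s hs t ht hst
  refine Set.disjoint_left.mpr fun x hxs hxt => hst ?_
  rw [← filter_range_eq_of_mem_bitCylinder (hT s hs) hxs,
    filter_range_eq_of_mem_bitCylinder (hT t ht) hxt]

lemma measure_bitCylinder {r : ℝ} {μ : Measure (ℕ → Bool)} (hμ : IsBernoulli r μ)
    {n : ℕ} {s : Finset ℕ} (hs : s ⊆ range n) :
    μ (bitCylinder n s) = ENNReal.ofReal (r ^ #s * (1 - r) ^ (n - #s)) := by
  have hzeros : (range n).filter (fun i => decide (i ∈ s) = false) = range n \ s := by
    ext i
    simp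
  rw [bitCylinder, hμ, filter_range_decide_mem hs, hzeros, card_sdiff_of_subset hs, card_range]

lemma measure_biUnion_bitCylinder {r : ℝ} {μ : Measure (ℕ → Bool)} (hμ : IsBernoulli r μ)
    {n : ℕ} {T : Finset (Finset ℕ)} (hT : ∀ s ∈ T, s ⊆ range n) :
    μ (⋃ s ∈ T, bitCylinder n s) =
      ∑ s ∈ T, ENNReal.ofReal (r ^ #s * (1 - r) ^ (n - #s)) := by
  rw [measure_biUnion_finset (pairwiseDisjoint_bitCylinder hT)
    fun s _ => measurableSet_bitCylinder n s]
  exact sum_congr rfl fun s hs => measure_bitCylinder hμ (hT s hs)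

lemma exists_family_sum_card_eq {n : ℕ} {c : ℕ → ℕ} (hc : ∀ i ≤ n, c i ≤ n.choose i) :
    ∃ T : Finset (Finset ℕ), (∀ s ∈ T, s ⊆ range n) ∧
      ∀ {M : Type*} [AddCommMonoid M] (f : ℕ → M),
        ∑ s ∈ T, f #s = ∑ i ∈ range (n + 1), c i • f i := by
  have hlevel : ∀ i ∈ range (n + 1), ∃ t ⊆ powersetCard i (range n), #t = c i := fun i hi =>
    exists_subset_card_eq <| by
      simpa [card_powersetCard] using hc i (mem_range_succ_iff.mp hi)
  choose! t ht_sub ht_card using hlevel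
  have hcard : ∀ i ∈ range (n + 1), ∀ s ∈ t i, s ⊆ range n ∧ #s = i := fun i hi s hs =>
    mem_powersetCard.mp (ht_sub i hi hs)
  refine ⟨(range (n + 1)).biUnion t, fun s hs => ?_, fun f => ?_⟩
  · obtain ⟨i, hi, hsi⟩ := mem_biUnion.mp hs
    exact (hcard i hi s hsi).1
  · have hdisj : (range (n + 1) : Set ℕ).PairwiseDisjoint t := fun i hi j hj hij =>
      disjoint_left.mpr fun s hsi hsj =>
        hij ((hcard i hi s hsi).2.symm.trans (hcard j hj s hsj).2)
    rw [sum_biUnion hdisj]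
    refine sum_congr rfl fun i hi => ?_
    rw [sum_congr rfl fun s hs => by rw [(hcard i hi s hs).2], sum_const, ht_card i hi]

/-- every partition polynomial represents some clopen subset of the
Cantor set. -/
theorem exists_isClopen_of_partition_polynomial (P : Polynomial ℤ)
    (hP : IsPartitionPolynomial P) :
    ∃ A : Set (ℕ → Bool), IsClopen A ∧
      ∀ r ∈ Set.Icc (0 : ℝ) 1, ∀ μ : Measure (ℕ → Bool), IsBernoulli r μ →
        μ A = ENNReal.ofReal (aeval r P) := by
  obtain ⟨n, a, ha, rfl⟩ := hP
  obtain ⟨T, hT, hsum⟩ := exists_family_sum_card_eq (c := fun i => (a i).toNat)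
    fun i hi => Int.toNat_le.mpr (ha i hi).2
  refine ⟨⋃ s ∈ T, bitCylinder n s,
    T.finite_toSet.isClopen_biUnion fun s _ => isClopen_bitCylinder n s, ?_⟩
  rintro r ⟨hr0, hr1⟩ μ hμ
  have hbasis : ∀ i, 0 ≤ r ^ i * (1 - r) ^ (n - i) := fun i =>
    mul_nonneg (pow_nonneg hr0 i) (pow_nonneg (sub_nonneg.mpr hr1) _)
  have hcoeff : ∀ i ∈ range (n + 1), (a i).toNat = (a i : ℝ) := fun i hi => by
    exact_mod_cast Int.toNat_of_nonneg (ha i (mem_range_succ_iff.mp hi)).1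
  rw [measure_biUnion_bitCylinder hμ hT, hsum fun i => ENNReal.ofReal (r ^ i * (1 - r) ^ (n - i))]
  simp only [map_sum, map_mul, eq_intCast, map_intCast, map_pow, map_sub, map_one, aeval_X,
    mul_assoc]
  rw [ENNReal.ofReal_sum_of_nonneg fun i hi =>
    hcoeff i hi ▸ mul_nonneg (Nat.cast_nonneg _) (hbasis i)]
  refine sum_congr rfl fun i hi => ?_
  rw [← hcoeff i hi, ENNReal.ofReal_mul (Nat.cast_nonneg _), ENNReal.ofReal_natCast, nsmul_eq_mul]
end

section
/- If P and Q are partition polynomials, then their composition P ∘ Q is a partition polynomial. -/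
/-!
Let `C_n` be the set of ℕ-linear combinations of the polynomials `X ^ i * (1 - X) ^ (n - i)`,
`i ≤ n`. Since these are linearly independent and `∑ C(n,i) X ^ i (1 - X) ^ (n - i) = 1`, `P` is a
partition polynomial iff `P ∈ C_n` and `1 - P ∈ C_n` for some `n`. Moreover `C_m * C_n ⊆ C_{m+n}`,
so if `Q, 1 - Q ∈ C_m` then each `X ^ i * (1 - X) ^ (n - i)` composed with `Q` lies in `C_{nm}`.
Applying this to `P` and to `1 - P` shows that `P.comp Q` and `1 - P.comp Q` lie in `C_{nm}`.
-/

open MeasureTheory Polynomial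

namespace Polynomial

section CommRing

variable (R : Type*) [CommRing R]

noncomputable def bernsteinTerm (n i : ℕ) : R[X] := X ^ i * (1 - X) ^ (n - i)

noncomputable def bernsteinCone (n : ℕ) : Submodule ℕ R[X] :=
  Submodule.span ℕ (Set.range fun i : Fin (n + 1) => bernsteinTerm R n i)

variable {R}

theorem bernsteinTerm_mul {m n i j : ℕ} (hi : i ≤ m) (hj : j ≤ n) :
    bernsteinTerm R m i * bernsteinTerm R n j = bernsteinTerm R (m + n) (i + j) := by
  rw [bernsteinTerm, bernsteinTerm, bernsteinTerm,
    show m + n - (i + j) = (m - i) + (n - j) by omega, pow_add, pow_add]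
  ring

theorem sum_choose_nsmul_bernsteinTerm (n : ℕ) :
    ∑ i ∈ Finset.range (n + 1), n.choose i • bernsteinTerm R n i = 1 := by
  rw [← bernsteinPolynomial.sum R n]
  refine Finset.sum_congr rfl fun i _ => ?_
  rw [bernsteinPolynomial, bernsteinTerm, nsmul_eq_mul, mul_assoc]

theorem bernsteinTerm_mem_bernsteinCone {n i : ℕ} (hi : i ≤ n) :
    bernsteinTerm R n i ∈ bernsteinCone R n :=
  Submodule.subset_span ⟨⟨i, Nat.lt_succ_of_le hi⟩, rfl⟩

theorem mul_mem_bernsteinCone {m n : ℕ} {p q : R[X]} (hp : p ∈ bernsteinCone R m)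
    (hq : q ∈ bernsteinCone R n) : p * q ∈ bernsteinCone R (m + n) := by
  have hle : bernsteinCone R m * bernsteinCone R n ≤ bernsteinCone R (m + n) := by
    rw [bernsteinCone, bernsteinCone, Submodule.span_mul_span, Submodule.span_le]
    rintro _ ⟨_, ⟨i, rfl⟩, _, ⟨j, rfl⟩, rfl⟩
    dsimp only
    rw [bernsteinTerm_mul (Nat.lt_succ_iff.mp i.2) (Nat.lt_succ_iff.mp j.2)]
    exact bernsteinTerm_mem_bernsteinCone (by omega)
  exact hle (Submodule.mul_mem_mul hp hq)

theorem pow_mem_bernsteinCone {m : ℕ} {p : R[X]} (hp : p ∈ bernsteinCone R m) (k : ℕ) :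
    p ^ k ∈ bernsteinCone R (k * m) := by
  induction k with
  | zero => simpa [bernsteinTerm] using bernsteinTerm_mem_bernsteinCone (R := R) (le_refl 0)
  | succ k ih => simpa [pow_succ, add_mul] using mul_mem_bernsteinCone ih hp

theorem comp_mem_bernsteinCone {m n : ℕ} {p q : R[X]} (hp : p ∈ bernsteinCone R n)
    (hq : q ∈ bernsteinCone R m) (hq' : 1 - q ∈ bernsteinCone R m) :
    p.comp q ∈ bernsteinCone R (n * m) := by
  induction hp using Submodule.span_induction with
  | mem _ h =>
    obtain ⟨i, rfl⟩ := h
    have hi : (i : ℕ) + (n - i) = n := by omega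
    simpa [bernsteinTerm, ← add_mul, hi] using
      mul_mem_bernsteinCone (pow_mem_bernsteinCone hq i) (pow_mem_bernsteinCone hq' (n - i))
  | zero => simp
  | add _ _ _ _ hx hy => simpa [add_comp] using add_mem hx hy
  | smul a _ _ hx => simpa [smul_comp] using Submodule.smul_mem _ a hx

end CommRing

theorem linearIndependent_bernsteinTerm (n : ℕ) :
    LinearIndependent ℤ fun i : Fin (n + 1) => bernsteinTerm ℤ n i := by
  have hℚ : LinearIndependent ℚ fun i : Fin (n + 1) => bernsteinTerm ℚ n i := by
    have hchoose (i : Fin (n + 1)) : (n.choose i : ℚ) ≠ 0 := by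
      exact_mod_cast (Nat.choose_pos (Nat.lt_succ_iff.mp i.2)).ne'
    convert (bernsteinPolynomial.linearIndependent n).units_smul
      fun i => (Units.mk0 _ (hchoose i))⁻¹ with i
    rw [Pi.smul_apply', bernsteinPolynomial, Units.smul_def, Units.val_inv_eq_inv_val,
      Units.val_mk0, mul_assoc, ← nsmul_eq_mul, ← Nat.cast_smul_eq_nsmul ℚ, smul_smul,
      inv_mul_cancel₀ (hchoose i), one_smul, bernsteinTerm]
  let castℚ : ℤ[X] →ₗ[ℤ] ℚ[X] := (mapRingHom (Int.castRingHom ℚ)).toAddMonoidHom.toIntLinearMap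
  have hcast : castℚ ∘ (fun i : Fin (n + 1) => bernsteinTerm ℤ n i) =
      fun i : Fin (n + 1) => bernsteinTerm ℚ n i := by
    ext i : 1
    simp [castℚ, bernsteinTerm]
  refine LinearIndependent.of_comp castℚ ?_
  rw [hcast]
  exact hℚ.restrict_scalars' ℤ

theorem sum_C_mul_mem_bernsteinCone {n : ℕ} {a : ℕ → ℤ} (ha : ∀ i ≤ n, 0 ≤ a i) :
    ∑ i ∈ Finset.range (n + 1), C (a i) * X ^ i * (1 - X) ^ (n - i) ∈ bernsteinCone ℤ n := by
  refine Submodule.sum_mem _ fun i hi => ?_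
  have hi : i ≤ n := Nat.lt_succ_iff.mp (Finset.mem_range.mp hi)
  have hterm : C (a i) * X ^ i * (1 - X) ^ (n - i) = (a i).toNat • bernsteinTerm ℤ n i := by
    rw [nsmul_eq_mul, mul_assoc, bernsteinTerm, ← C_eq_natCast, Int.toNat_of_nonneg (ha i hi)]
  rw [hterm]
  exact Submodule.smul_mem _ _ (bernsteinTerm_mem_bernsteinCone hi)

end Polynomial

theorem isPartitionPolynomial_iff {P : ℤ[X]} :
    IsPartitionPolynomial P ↔ ∃ n, P ∈ bernsteinCone ℤ n ∧ 1 - P ∈ bernsteinCone ℤ n := by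
  constructor
  · rintro ⟨n, a, ha, rfl⟩
    refine ⟨n, sum_C_mul_mem_bernsteinCone fun i hi => (ha i hi).1, ?_⟩
    have hsub := sum_C_mul_mem_bernsteinCone (a := fun i => n.choose i - a i)
      fun i hi => sub_nonneg.mpr (ha i hi).2
    simp_rw [C_sub, sub_mul, Finset.sum_sub_distrib] at hsub
    convert hsub using 2
    refine (bernsteinPolynomial.sum ℤ n).symm.trans (Finset.sum_congr rfl fun i _ => ?_)
    simp [bernsteinPolynomial]
  · rintro ⟨n, hP, hP'⟩
    obtain ⟨c, rfl⟩ := (Submodule.mem_span_range_iff_exists_fun ℕ).mp hP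
    obtain ⟨d, hd⟩ := (Submodule.mem_span_range_iff_exists_fun ℕ).mp hP'
    have hcd : ∀ i, c i + d i = n.choose i := by
      refine Fintype.linearIndependent_iffₛ.mp
        ((linearIndependent_bernsteinTerm n).restrict_scalars' ℕ) _ _ ?_
      simp_rw [add_smul, Finset.sum_add_distrib, hd, add_sub_cancel]
      rw [Fin.sum_univ_eq_sum_range (fun i => n.choose i • bernsteinTerm ℤ n i),
        sum_choose_nsmul_bernsteinTerm]
    refine ⟨n, fun i => if h : i < n + 1 then c ⟨i, h⟩ else 0, fun i hi => ?_, ?_⟩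
    · dsimp only
      rw [dif_pos (Nat.lt_succ_of_le hi)]
      exact ⟨Int.natCast_nonneg _, Int.ofNat_le.mpr ((Nat.le_add_right _ _).trans (hcd _).le)⟩
    · rw [← Fin.sum_univ_eq_sum_range (fun i => C _ * X ^ i * (1 - X) ^ (n - i))]
      refine Finset.sum_congr rfl fun i _ => ?_
      simp [bernsteinTerm, mul_assoc, i.isLt]

/-- the composition of two partition polynomials is a partition
polynomial. -/
theorem isPartitionPolynomial_comp (P Q : Polynomial ℤ)
    (hP : IsPartitionPolynomial P) (hQ : IsPartitionPolynomial Q) :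
    IsPartitionPolynomial (P.comp Q) := by
  obtain ⟨n, hP, hP'⟩ := isPartitionPolynomial_iff.mp hP
  obtain ⟨m, hQ, hQ'⟩ := isPartitionPolynomial_iff.mp hQ
  refine isPartitionPolynomial_iff.mpr ⟨n * m, comp_mem_bernsteinCone hP hQ hQ', ?_⟩
  simpa [sub_comp] using comp_mem_bernsteinCone hP' hQ hQ'
end

section
/- A partition polynomial P is dominated by the partition polynomial X if and only if P(X) = X · P₁(X) for some partition polynomial P₁. -/
open MeasureTheory Polynomial

/-- `P` dominates `Q`: for some `n` there are simultaneous partition forms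
`P = ∑ a_i X^i (1-X)^(n-i)` and `Q = ∑ b_i X^i (1-X)^(n-i)` with
`0 ≤ b_i ≤ a_i ≤ C(n,i)`. -/
def Dominates (P Q : Polynomial ℤ) : Prop :=
  ∃ (n : ℕ) (a b : ℕ → ℤ),
    (∀ i ≤ n, 0 ≤ b i ∧ b i ≤ a i ∧ a i ≤ (n.choose i : ℤ)) ∧
    P = ∑ i ∈ Finset.range (n + 1), C (a i) * X ^ i * (1 - X) ^ (n - i) ∧
    Q = ∑ i ∈ Finset.range (n + 1), C (b i) * X ^ i * (1 - X) ^ (n - i)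

lemma pp_reindex (n : ℕ) (c : ℕ → ℤ) (h0 : c 0 = 0) :
    ∑ i ∈ Finset.range (n+2), C (c i) * X^i * (1-X)^(n+1-i)
      = X * ∑ j ∈ Finset.range (n+1), C (c (j+1)) * X^j * (1-X)^(n-j) := by
  rw [Finset.sum_range_succ']
  simp only [h0, map_zero, zero_mul, add_zero, Finset.mul_sum]
  apply Finset.sum_congr rfl
  intro j _
  rw [Nat.succ_sub_succ, pow_succ]
  ring

lemma pp_binom (n : ℕ) :
    ∑ j ∈ Finset.range (n+1), C ((n.choose j : ℤ)) * X^j * (1-X)^(n-j) = 1 := by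
  calc ∑ j ∈ Finset.range (n+1), C ((n.choose j : ℤ)) * X^j * (1-X)^(n-j)
      = ∑ j ∈ Finset.range (n+1), X^j * (1-X)^(n-j) * (n.choose j : ℤ[X]) := by
        apply Finset.sum_congr rfl
        intro j _
        rw [map_natCast C]
        ring
    _ = (X + (1 - X))^n := (add_pow (X : ℤ[X]) (1 - X) n).symm
    _ = 1 := by simp

lemma pp_X_eq (n : ℕ) :
    (X : ℤ[X]) = ∑ i ∈ Finset.range (n+2),
      C (if i = 0 then 0 else ((n.choose (i-1) : ℤ))) * X^i * (1-X)^(n+1-i) := by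
  rw [pp_reindex _ _ (by simp)]
  simp only [Nat.add_sub_cancel, if_neg (Nat.succ_ne_zero _)]
  rw [pp_binom, mul_one]

lemma pp_eval0 (n : ℕ) (c : ℕ → ℤ) :
    (∑ i ∈ Finset.range (n+1), C (c i) * X^i * (1-X)^(n-i)).eval 0 = c 0 := by
  rw [Polynomial.eval_finset_sum]
  rw [Finset.sum_eq_single 0]
  · simp
  · intro i _ hi; simp [zero_pow hi]
  · simp

lemma pp_unique : ∀ (n : ℕ) (c : ℕ → ℤ),
    (∑ i ∈ Finset.range (n+1), C (c i) * X^i * (1-X)^(n-i)) = 0 → ∀ i ≤ n, c i = 0 := by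
  intro n
  induction n with
  | zero =>
    intro c h i hi
    interval_cases i
    have := congrArg (Polynomial.eval 0) h
    rwa [pp_eval0, Polynomial.eval_zero] at this
  | succ m ih =>
    intro c h i hi
    have h0 : c 0 = 0 := by
      have := congrArg (Polynomial.eval 0) h
      rwa [pp_eval0, Polynomial.eval_zero] at this
    have h1 : X * (∑ j ∈ Finset.range (m+1), C (c (j+1)) * X^j * (1-X)^(m-j)) = 0 := by
      rw [← pp_reindex m c h0]; exact h
    have h2 := (mul_eq_zero.1 h1).resolve_left Polynomial.X_ne_zero
    rcases Nat.eq_zero_or_pos i with rfl | hpos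
    · exact h0
    · obtain ⟨j, rfl⟩ := Nat.exists_eq_add_of_lt hpos
      simp only [zero_add] at *
      exact ih _ h2 j (by omega)

/-- a partition polynomial `P` is dominated by `X` iff
`P = X * P₁` for some partition polynomial `P₁`. -/
theorem dominated_by_X_iff (P : Polynomial ℤ) (hP : IsPartitionPolynomial P) :
    Dominates X P ↔ ∃ P₁ : Polynomial ℤ, IsPartitionPolynomial P₁ ∧ P = X * P₁ := by
  constructor
  · rintro ⟨n, a, b, hab, hX, hPb⟩
    rcases n with _ | m
    · exfalso
      rw [Finset.sum_range_one] at hX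
      norm_num at hX
      have h1 : ((a 0 : ℤ) : ℤ[X]).coeff 1 = 0 := by
        rw [← Polynomial.C_eq_intCast, Polynomial.coeff_C]
        simp
      have h2 : (X : ℤ[X]).coeff 1 = 1 := Polynomial.coeff_X_one
      rw [hX, h1] at h2
      exact absurd h2 (by norm_num)
    · set A : ℕ → ℤ := fun i => if i = 0 then 0 else ((m.choose (i-1) : ℤ)) with hA
      have hX' : X = ∑ i ∈ Finset.range (m+2), C (a i) * X^i * (1-X)^(m+1-i) := hX
      have hPb' : P = ∑ i ∈ Finset.range (m+2), C (b i) * X^i * (1-X)^(m+1-i) := hPb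
      have hz : ∑ i ∈ Finset.range (m+2), C (a i - A i) * X^i * (1-X)^(m+1-i) = 0 := by
        have e : ∀ i ∈ Finset.range (m+2), C (a i - A i) * X^i * (1-X)^(m+1-i)
            = C (a i) * X^i * (1-X)^(m+1-i) - C (A i) * X^i * (1-X)^(m+1-i) := by
          intro i _; rw [map_sub]; ring
        rw [Finset.sum_congr rfl e, Finset.sum_sub_distrib, ← hX', ← pp_X_eq, sub_self]
      have key : ∀ i ≤ m+1, a i = A i := by
        intro i hi
        have := pp_unique (m+1) _ hz i hi
        omega
      have hb0 : b 0 = 0 := by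
        have h1 := (hab 0 (by omega)).1
        have h2 := (hab 0 (by omega)).2.1
        have h3 := key 0 (by omega)
        simp [hA] at h3
        omega
      refine ⟨∑ j ∈ Finset.range (m+1), C (b (j+1)) * X^j * (1-X)^(m-j),
        ⟨m, fun j => b (j+1), ?_, rfl⟩, ?_⟩
      · intro j hj
        have h1 := hab (j+1) (by omega)
        have h2 := key (j+1) (by omega)
        simp [hA] at h2
        exact ⟨h1.1, h2 ▸ h1.2.1⟩
      · rw [hPb', pp_reindex m b hb0]
  · rintro ⟨P₁, ⟨n, a, ha, hP₁⟩, hPX⟩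
    refine ⟨n+1, (fun i => if i = 0 then 0 else ((n.choose (i-1) : ℤ))),
      (fun i => if i = 0 then 0 else a (i-1)), ?_, pp_X_eq n, ?_⟩
    · intro i hi
      rcases Nat.eq_zero_or_pos i with rfl | hpos
      · simp
      · obtain ⟨j, rfl⟩ : ∃ j, i = j + 1 := ⟨i - 1, by omega⟩
        simp only [Nat.succ_ne_zero, if_false, Nat.add_sub_cancel]
        have h1 := ha j (by omega)
        refine ⟨h1.1, h1.2, ?_⟩
        have : n.choose j ≤ (n+1).choose (j+1) := by
          rw [Nat.choose_succ_succ]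
          exact Nat.le_add_right _ _
        exact_mod_cast this
    · show P = ∑ i ∈ Finset.range (n+2),
        C (if i = 0 then 0 else a (i-1)) * X^i * (1-X)^(n+1-i)
      rw [pp_reindex n _ (by simp), hPX, hP₁]
      refine congrArg (X * ·) (Finset.sum_congr rfl fun j _ => ?_)
      simp
end

section
/- Let P and Q be partition polynomials. Then P dominates Q if and only if every clopen subset A of the Cantor set Ω that is represented by P (i.e., μ_r(A) = P(r) for all r ∈ [0,1]) has a clopen subset B represented by Q (i.e., μ_r(B) = Q(r) for all r ∈ [0,1]). -/
open MeasureTheory Polynomial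

/-- The partition polynomial `P` represents the clopen set `A`:
`μ_r(A) = P(r)` for all `r ∈ [0,1]`. -/
def Represents (P : Polynomial ℤ) (A : Set (ℕ → Bool)) : Prop :=
  ∀ r ∈ Set.Icc (0 : ℝ) 1, ∀ μ : Measure (ℕ → Bool), IsBernoulli r μ →
    μ A = ENNReal.ofReal (aeval r P)


/-!
A clopen subset of the Cantor set depends only on finitely many coordinates: for all large `m`
it is the set of sequences whose support in `{0, …, m-1}` lies in a family `S` of subsets of
`{0, …, m-1}`, and it is then represented by `∑ᵢ cᵢ Xⁱ (1-X)^(m-i)`, where `cᵢ` is the number of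
members of `S` of size `i`. Bernoulli measures exist for every `r ∈ [0,1]`, so the partition
polynomial representing a clopen set is unique, and the polynomials `Xⁱ (1-X)^(m-i)` are linearly
independent, so the counts `cᵢ` are determined by the polynomial and the level `m`.

A clopen `B ⊆ A` then gives nested families at a common level, i.e. a dominance. Conversely a
dominance is realised by nested families `V ⊆ W`; for any `A` represented by `P`, at a common
level the family of `A` has the same counts as the one of `W`, hence contains a subfamily with
the counts of `V`, which carves out the required `B`.
-/

open Finset

section Bernstein

variable {R : Type*} [CommRing R]

noncomputable def bernsteinSum (n : ℕ) (c : ℕ → R) : R[X] :=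
  ∑ i ∈ range (n + 1), C (c i) * X ^ i * (1 - X) ^ (n - i)

lemma bernsteinSum_congr {n : ℕ} {c d : ℕ → R} (h : ∀ i ≤ n, c i = d i) :
    bernsteinSum n c = bernsteinSum n d :=
  sum_congr rfl fun i hi => by rw [h i (Nat.lt_succ_iff.1 (mem_range.1 hi))]

lemma bernsteinSum_sub (n : ℕ) (c d : ℕ → R) :
    bernsteinSum n (c - d) = bernsteinSum n c - bernsteinSum n d := by
  simp only [bernsteinSum, ← sum_sub_distrib, Pi.sub_apply, map_sub, sub_mul]

lemma bernsteinSum_succ (n : ℕ) (c : ℕ → R) :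
    bernsteinSum (n + 1) c = C (c 0) * (1 - X) ^ (n + 1) + X * bernsteinSum n (c ∘ Nat.succ) := by
  rw [bernsteinSum, sum_range_succ', bernsteinSum, mul_sum, add_comm]
  congr 1
  · simp
  · refine sum_congr rfl fun i _ => ?_
    rw [Nat.succ_sub_succ, Function.comp_apply, pow_succ]
    ring

lemma eq_zero_of_bernsteinSum_eq_zero {n : ℕ} {c : ℕ → R} (h : bernsteinSum n c = 0) :
    ∀ i ≤ n, c i = 0 := by
  induction n generalizing c with
  | zero => simpa [bernsteinSum] using h
  | succ n ih =>
    rw [bernsteinSum_succ] at h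
    have hc₀ : c 0 = 0 := by simpa using congrArg (eval 0) h
    rw [hc₀, map_zero, zero_mul, zero_add] at h
    have htail := ih ((isRegular_X (R := R)).left (h.trans (mul_zero X).symm))
    rintro (_ | i) hi
    · exact hc₀
    · exact htail i (by omega)

lemma eq_of_bernsteinSum_eq {n : ℕ} {c d : ℕ → R} (h : bernsteinSum n c = bernsteinSum n d) :
    ∀ i ≤ n, c i = d i := by
  have hsub : bernsteinSum n (c - d) = 0 := by rw [bernsteinSum_sub, h, sub_self]
  exact fun i hi => sub_eq_zero.1 (eq_zero_of_bernsteinSum_eq_zero hsub i hi)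

end Bernstein

lemma aeval_bernsteinSum_nonneg {n : ℕ} {c : ℕ → ℤ} (hc : ∀ i ≤ n, 0 ≤ c i) {r : ℝ}
    (hr : r ∈ Set.Icc (0 : ℝ) 1) : 0 ≤ aeval r (bernsteinSum n c) := by
  rw [bernsteinSum, map_sum]
  refine sum_nonneg fun i hi => ?_
  have hci : (0 : ℝ) ≤ c i := Int.cast_nonneg (hc i (Nat.lt_succ_iff.1 (mem_range.1 hi)))
  have h1r : 0 ≤ 1 - r := sub_nonneg.2 hr.2
  simp only [map_mul, map_pow, aeval_X, map_sub, map_one, eq_intCast, map_intCast]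
  exact mul_nonneg (mul_nonneg hci (pow_nonneg hr.1 _)) (pow_nonneg h1r _)

lemma IsPartitionPolynomial.aeval_nonneg {P : ℤ[X]} (hP : IsPartitionPolynomial P) {r : ℝ}
    (hr : r ∈ Set.Icc (0 : ℝ) 1) : 0 ≤ aeval r P := by
  obtain ⟨n, a, ha, rfl⟩ := hP
  exact aeval_bernsteinSum_nonneg (fun i hi => (ha i hi).1) hr

lemma Finset.exists_subset_card_filter_eq {α β : Type*} [DecidableEq α] [DecidableEq β]
    (s : Finset α) (g : α → β) (t : Finset β) (d : β → ℕ)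
    (hd : ∀ b ∈ t, d b ≤ #{a ∈ s | g a = b}) :
    ∃ s₀ ⊆ s, ∀ b ∈ t, #{a ∈ s₀ | g a = b} = d b := by
  have hfiber : ∀ b, ∃ w ⊆ {a ∈ s | g a = b}, #w = min (d b) #{a ∈ s | g a = b} :=
    fun b => exists_subset_card_eq (min_le_right _ _)
  choose w hws hwd using hfiber
  have hwg : ∀ b, ∀ a ∈ w b, a ∈ s ∧ g a = b := fun b a ha => mem_filter.1 (hws b ha)
  refine ⟨t.biUnion w, biUnion_subset.2 fun b _ a ha => (hwg b a ha).1, fun b hb => ?_⟩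
  have hfilter : {a ∈ t.biUnion w | g a = b} = w b := by
    ext a
    simp only [mem_filter, mem_biUnion]
    constructor
    · rintro ⟨⟨b', -, ha⟩, rfl⟩
      rwa [(hwg b' a ha).2]
    · exact fun ha => ⟨⟨b, hb, ha⟩, (hwg b a ha).2⟩
  rw [hfilter, hwd, min_eq_left (hd b hb)]

section LevelCount

variable {α : Type*}

def levelCount (S : Finset (Finset α)) (i : ℕ) : ℕ := #{T ∈ S | #T = i}

lemma levelCount_mono {S S' : Finset (Finset α)} (h : S ⊆ S') (i : ℕ) :
    levelCount S i ≤ levelCount S' i :=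
  card_le_card (filter_subset_filter _ h)

lemma levelCount_powerset (s : Finset α) (i : ℕ) : levelCount s.powerset i = (#s).choose i := by
  rw [levelCount, ← powersetCard_eq_filter, card_powersetCard]

lemma levelCount_le_choose {m : ℕ} {S : Finset (Finset ℕ)} (hS : S ⊆ (range m).powerset)
    (i : ℕ) : levelCount S i ≤ m.choose i :=
  (levelCount_mono hS i).trans_eq (by rw [levelCount_powerset, card_range])

lemma exists_subset_levelCount_eq [DecidableEq α] (S : Finset (Finset α)) (m : ℕ) (d : ℕ → ℤ)
    (hd : ∀ i ≤ m, 0 ≤ d i ∧ d i ≤ levelCount S i) :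
    ∃ S₀ ⊆ S, ∀ i ≤ m, (levelCount S₀ i : ℤ) = d i := by
  obtain ⟨S₀, hS₀, hcount⟩ := S.exists_subset_card_filter_eq card (range (m + 1))
    (fun i => (d i).toNat) fun i hi => by
      have := hd i (Nat.lt_succ_iff.1 (mem_range.1 hi)); rw [levelCount] at this; omega
  refine ⟨S₀, hS₀, fun i hi => ?_⟩
  rw [levelCount, hcount i (mem_range.2 (Nat.lt_succ_of_le hi)), Int.toNat_of_nonneg (hd i hi).1]

end LevelCount

lemma bernsteinSum_levelCount {R α : Type*} [CommRing R] {S : Finset (Finset α)} {m : ℕ}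
    (hS : ∀ T ∈ S, #T ≤ m) :
    bernsteinSum m (fun i => (levelCount S i : R)) = ∑ T ∈ S, X ^ #T * (1 - X) ^ (m - #T) := by
  rw [bernsteinSum, ← sum_fiberwise_of_maps_to (g := card) (t := range (m + 1))
    fun T hT => mem_range.2 (Nat.lt_succ_of_le (hS T hT))]
  refine sum_congr rfl fun i _ => ?_
  rw [sum_congr rfl fun T hT => by rw [(mem_filter.1 hT).2], sum_const, levelCount, nsmul_eq_mul,
    map_natCast, mul_assoc]

lemma isPartitionPolynomial_bernsteinSum_levelCount {m : ℕ} {S : Finset (Finset ℕ)}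
    (hS : S ⊆ (range m).powerset) :
    IsPartitionPolynomial (bernsteinSum m fun i => (levelCount S i : ℤ)) :=
  ⟨m, _, fun i _ => ⟨Nat.cast_nonneg _, Nat.cast_le.2 (levelCount_le_choose hS i)⟩, rfl⟩


section Cylinders

variable {E : Type*} [TopologicalSpace E] [DiscreteTopology E] {A : Set (ℕ → E)} {m : ℕ}

lemma isOpen_of_dependsOn (hA : DependsOn (· ∈ A) (Set.Iio m)) : IsOpen A := by
  refine isOpen_iff_forall_mem_open.2 fun x hx => ⟨PiNat.cylinder x m, fun y hy => ?_,
    PiNat.isOpen_cylinder _ x m, PiNat.self_mem_cylinder x m⟩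
  have : (y ∈ A) = (x ∈ A) := hA fun i hi => PiNat.mem_cylinder_iff.1 hy i hi
  exact this ▸ hx

lemma isClopen_of_dependsOn (hA : DependsOn (· ∈ A) (Set.Iio m)) : IsClopen A :=
  ⟨isOpen_compl_iff.1 (isOpen_of_dependsOn fun _ _ h => congrArg Not (hA h)),
    isOpen_of_dependsOn hA⟩

lemma IsClopen.exists_dependsOn [CompactSpace E] (hA : IsClopen A) :
    ∃ m, DependsOn (· ∈ A) (Set.Iio m) := by
  have hloc : ∀ x, ∃ n, PiNat.cylinder x n ⊆ {y | y ∈ A ↔ x ∈ A} := by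
    intro x
    have hopen : IsOpen {y | y ∈ A ↔ x ∈ A} := by
      by_cases hx : x ∈ A
      · simpa [hx] using hA.isOpen
      · simp only [hx, iff_false]
        exact hA.compl.isOpen
    obtain ⟨_, ⟨z, n, rfl⟩, hxz, hsub⟩ :=
      (PiNat.isTopologicalBasis_cylinders _).exists_subset_of_mem_open Iff.rfl hopen
    exact ⟨n, PiNat.mem_cylinder_iff_eq.1 hxz ▸ hsub⟩
  choose n hn using hloc
  obtain ⟨t, ht⟩ := isCompact_univ.elim_finite_subcover (fun x => PiNat.cylinder x (n x))
    (fun x => PiNat.isOpen_cylinder _ x (n x)) fun x _ =>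
      Set.mem_iUnion.2 ⟨x, PiNat.self_mem_cylinder x (n x)⟩
  refine ⟨t.sup n, fun x y hxy => ?_⟩
  obtain ⟨z, hz, hxz⟩ := Set.mem_iUnion₂.1 (ht (Set.mem_univ x))
  have hyz : y ∈ PiNat.cylinder z (n z) := fun i hi =>
    (hxy i (lt_of_lt_of_le hi (le_sup hz))).symm.trans (hxz i hi)
  exact propext ((hn z hxz).trans (hn z hyz).symm)

lemma IsClopen.eventually_dependsOn [CompactSpace E] (hA : IsClopen A) :
    ∀ᶠ m in Filter.atTop, DependsOn (· ∈ A) (Set.Iio m) := by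
  obtain ⟨m, hm⟩ := hA.exists_dependsOn
  exact Filter.eventually_atTop.2 ⟨m, fun k hk => hm.mono (Set.Iio_subset_Iio hk)⟩

end Cylinders

section Prefix

def prefixSupport (m : ℕ) (x : ℕ → Bool) : Finset ℕ := {i ∈ range m | x i}

open scoped Classical in
noncomputable def prefixFamily (m : ℕ) (A : Set (ℕ → Bool)) : Finset (Finset ℕ) :=
  {T ∈ (range m).powerset | (fun i => decide (i ∈ T)) ∈ A}

variable {m : ℕ} {A B : Set (ℕ → Bool)}

lemma prefixSupport_mem_powerset (m : ℕ) (x : ℕ → Bool) :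
    prefixSupport m x ∈ (range m).powerset :=
  mem_powerset.2 (filter_subset _ _)

lemma dependsOn_prefixSupport (m : ℕ) : DependsOn (prefixSupport m) (Set.Iio m) := by
  intro x y hxy
  ext i
  simp only [prefixSupport, mem_filter, mem_range]
  exact and_congr_right fun hi => by rw [hxy i hi]

lemma isClopen_preimage_prefixSupport (m : ℕ) (S : Set (Finset ℕ)) :
    IsClopen (prefixSupport m ⁻¹' S) :=
  isClopen_of_dependsOn fun _ _ h => congrArg (· ∈ S) (dependsOn_prefixSupport m h)

lemma preimage_prefixSupport_prefixFamily (hA : DependsOn (· ∈ A) (Set.Iio m)) :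
    prefixSupport m ⁻¹' prefixFamily m A = A := by
  ext x
  simp only [Set.mem_preimage, prefixFamily, coe_filter, Set.mem_ofPred_eq,
    prefixSupport_mem_powerset, true_and]
  refine iff_of_eq (hA fun i hi => ?_)
  simp [prefixSupport, Set.mem_Iio.1 hi]

lemma prefixFamily_subset_powerset : prefixFamily m A ⊆ (range m).powerset := by
  classical exact filter_subset _ _

lemma prefixFamily_mono (h : A ⊆ B) : prefixFamily m A ⊆ prefixFamily m B := by
  intro T hT
  simp only [prefixFamily, mem_filter] at hT ⊢
  exact ⟨hT.1, h hT.2⟩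

end Prefix

lemma exists_isBernoulli {r : ℝ} (hr : r ∈ Set.Icc (0 : ℝ) 1) :
    ∃ μ : Measure (ℕ → Bool), IsBernoulli r μ := by
  have hr' : 0 ≤ 1 - r := sub_nonneg.2 hr.2
  let β := ProbabilityTheory.bernoulliMeasure true false (⟨r, hr⟩ : unitInterval)
  have hβ : ∀ b : Bool, β {b} = ENNReal.ofReal (if b then r else 1 - r) := by
    rintro (_ | _) <;>
      simp [β, ENNReal.ofReal, Real.toNNReal, hr.1, hr', unitInterval.toNNReal] <;> rfl
  refine ⟨Measure.infinitePi fun _ => β, fun s e => ?_⟩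
  have hcyl : {x : ℕ → Bool | ∀ i ∈ s, x i = e i} = Set.pi s fun i => {e i} := by
    ext; simp [Set.mem_pi]
  rw [hcyl, Measure.infinitePi_pi _ fun i _ => measurableSet_singleton _]
  simp_rw [hβ]
  rw [← ENNReal.ofReal_prod_of_nonneg fun i _ => by split_ifs <;> linarith [hr.1], prod_ite,
    prod_const, prod_const]
  simp only [Bool.not_eq_true]

lemma IsBernoulli.measure_preimage_prefixSupport_singleton {r : ℝ} {μ : Measure (ℕ → Bool)}
    (hμ : IsBernoulli r μ) {m : ℕ} {T : Finset ℕ} (hT : T ⊆ range m) :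
    μ (prefixSupport m ⁻¹' {T}) = ENNReal.ofReal (r ^ #T * (1 - r) ^ (m - #T)) := by
  have hcyl : prefixSupport m ⁻¹' {T} = {x | ∀ i ∈ range m, x i = decide (i ∈ T)} := by
    ext x
    simp only [Set.mem_preimage, Set.mem_singleton_iff, Set.mem_ofPred_eq]
    constructor
    · rintro rfl i hi
      simp [prefixSupport, mem_range.1 hi]
    · intro h
      ext i
      simp only [prefixSupport, mem_filter]
      by_cases hi : i ∈ range m
      · simp [hi, h i hi]
      · simp only [hi, false_and, false_iff]
        exact fun hiT => hi (hT hiT)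
  have htrue : {i ∈ range m | decide (i ∈ T) = true} = T := by
    simpa only [decide_eq_true_eq, filter_mem_eq_inter] using inter_eq_right.2 hT
  have hfalse : {i ∈ range m | decide (i ∈ T) = false} = range m \ T := by
    ext i
    simp
  rw [hcyl, hμ, htrue, hfalse, card_sdiff_of_subset hT, card_range]

lemma IsBernoulli.measure_preimage_prefixSupport {r : ℝ} {μ : Measure (ℕ → Bool)}
    (hμ : IsBernoulli r μ) (hr : r ∈ Set.Icc (0 : ℝ) 1) {m : ℕ} {S : Finset (Finset ℕ)}
    (hS : S ⊆ (range m).powerset) :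
    μ (prefixSupport m ⁻¹' S) = ENNReal.ofReal (∑ T ∈ S, r ^ #T * (1 - r) ^ (m - #T)) := by
  have hr' : 0 ≤ 1 - r := sub_nonneg.2 hr.2
  rw [← sum_measure_preimage_singleton S fun T _ =>
      (isClopen_preimage_prefixSupport m {T}).isOpen.measurableSet,
    ENNReal.ofReal_sum_of_nonneg fun T _ => by positivity [hr.1]]
  exact sum_congr rfl fun T hT =>
    hμ.measure_preimage_prefixSupport_singleton (mem_powerset.1 (hS hT))

lemma represents_preimage_prefixSupport {m : ℕ} {S : Finset (Finset ℕ)}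
    (hS : S ⊆ (range m).powerset) :
    Represents (bernsteinSum m fun i => (levelCount S i : ℤ)) (prefixSupport m ⁻¹' S) := by
  intro r hr μ hμ
  have hcard : ∀ T ∈ S, #T ≤ m := fun T hT => (card_le_card (mem_powerset.1 (hS hT))).trans_eq
    (card_range m)
  rw [hμ.measure_preimage_prefixSupport hr hS, bernsteinSum_levelCount hcard]
  simp

lemma Represents.eq {P Q : ℤ[X]} {A : Set (ℕ → Bool)} (hP : IsPartitionPolynomial P)
    (hQ : IsPartitionPolynomial Q) (hPA : Represents P A) (hQA : Represents Q A) : P = Q := by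
  have hagree : ∀ r ∈ Set.Icc (0 : ℝ) 1, aeval r P = aeval r Q := by
    intro r hr
    obtain ⟨μ, hμ⟩ := exists_isBernoulli hr
    exact (ENNReal.ofReal_eq_ofReal_iff (hP.aeval_nonneg hr) (hQ.aeval_nonneg hr)).1
      ((hPA r hr μ hμ).symm.trans (hQA r hr μ hμ))
  refine Polynomial.map_injective (Int.castRingHom ℝ) Int.cast_injective
    (Polynomial.eq_of_infinite_eval_eq _ _ ((Set.Icc_infinite zero_lt_one).mono fun r hr => ?_))
  simpa [aeval_def, eval_map] using hagree r hr

lemma Represents.eq_bernsteinSum_prefixFamily {P : ℤ[X]} {A : Set (ℕ → Bool)} {m : ℕ}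
    (hP : IsPartitionPolynomial P) (hPA : Represents P A)
    (hA : DependsOn (· ∈ A) (Set.Iio m)) :
    P = bernsteinSum m fun i => (levelCount (prefixFamily m A) i : ℤ) := by
  have hrep := represents_preimage_prefixSupport (prefixFamily_subset_powerset (m := m) (A := A))
  rw [preimage_prefixSupport_prefixFamily hA] at hrep
  exact hPA.eq hP (isPartitionPolynomial_bernsteinSum_levelCount prefixFamily_subset_powerset) hrep

lemma IsPartitionPolynomial.dominates_self {P : ℤ[X]} (hP : IsPartitionPolynomial P) :
    Dominates P P := by
  obtain ⟨n, a, ha, rfl⟩ := hP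
  exact ⟨n, a, a, fun i hi => ⟨(ha i hi).1, le_rfl, (ha i hi).2⟩, rfl, rfl⟩

lemma Dominates.exists_represents_subset {P Q : ℤ[X]} (h : Dominates P Q) :
    ∃ C D : Set (ℕ → Bool), D ⊆ C ∧ IsClopen C ∧ IsClopen D ∧ Represents P C ∧
      Represents Q D := by
  obtain ⟨n, a, b, hab, rfl, rfl⟩ := h
  obtain ⟨W, hW, hWa⟩ := exists_subset_levelCount_eq (range n).powerset n a fun i hi => by
    rw [levelCount_powerset, card_range]
    exact ⟨(hab i hi).1.trans (hab i hi).2.1, (hab i hi).2.2⟩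
  obtain ⟨V, hVW, hVb⟩ := exists_subset_levelCount_eq W n b fun i hi => by
    rw [hWa i hi]
    exact ⟨(hab i hi).1, (hab i hi).2.1⟩
  have hPW := represents_preimage_prefixSupport hW
  have hQV := represents_preimage_prefixSupport (hVW.trans hW)
  rw [bernsteinSum_congr hWa] at hPW
  rw [bernsteinSum_congr hVb] at hQV
  exact ⟨_, _, Set.preimage_mono (coe_subset.2 hVW), isClopen_preimage_prefixSupport n W,
    isClopen_preimage_prefixSupport n V, hPW, hQV⟩

lemma exists_subset_represents {P Q : ℤ[X]} {A C D : Set (ℕ → Bool)}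
    (hP : IsPartitionPolynomial P) (hQ : IsPartitionPolynomial Q) (hA : IsClopen A)
    (hC : IsClopen C) (hD : IsClopen D) (hDC : D ⊆ C) (hPA : Represents P A)
    (hPC : Represents P C) (hQD : Represents Q D) :
    ∃ B ⊆ A, IsClopen B ∧ Represents Q B := by
  obtain ⟨m, hAm, hCm, hDm⟩ :=
    (hA.eventually_dependsOn.and (hC.eventually_dependsOn.and hD.eventually_dependsOn)).exists
  have hcount : ∀ i ≤ m,
      (levelCount (prefixFamily m A) i : ℤ) = levelCount (prefixFamily m C) i :=
    eq_of_bernsteinSum_eq ((hPA.eq_bernsteinSum_prefixFamily hP hAm).symm.trans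
      (hPC.eq_bernsteinSum_prefixFamily hP hCm))
  obtain ⟨S, hSA, hS⟩ := exists_subset_levelCount_eq (prefixFamily m A) m
    (fun i => levelCount (prefixFamily m D) i) fun i hi =>
      ⟨Nat.cast_nonneg _, hcount i hi ▸ Nat.cast_le.2 (levelCount_mono (prefixFamily_mono hDC) i)⟩
  refine ⟨prefixSupport m ⁻¹' S, ?_, isClopen_preimage_prefixSupport m S, ?_⟩
  · rw [← preimage_prefixSupport_prefixFamily hAm]
    exact Set.preimage_mono (coe_subset.2 hSA)
  · rw [hQD.eq_bernsteinSum_prefixFamily hQ hDm, ← bernsteinSum_congr hS]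
    exact represents_preimage_prefixSupport (hSA.trans prefixFamily_subset_powerset)

lemma dominates_of_represents_subset {P Q : ℤ[X]} {A B : Set (ℕ → Bool)}
    (hP : IsPartitionPolynomial P) (hQ : IsPartitionPolynomial Q) (hA : IsClopen A)
    (hB : IsClopen B) (hBA : B ⊆ A) (hPA : Represents P A) (hQB : Represents Q B) :
    Dominates P Q := by
  obtain ⟨m, hAm, hBm⟩ := (hA.eventually_dependsOn.and hB.eventually_dependsOn).exists
  refine ⟨m, _, _, fun i _ => ⟨Nat.cast_nonneg _, ?_, ?_⟩,
    hPA.eq_bernsteinSum_prefixFamily hP hAm, hQB.eq_bernsteinSum_prefixFamily hQ hBm⟩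
  · exact Nat.cast_le.2 (levelCount_mono (prefixFamily_mono hBA) i)
  · exact Nat.cast_le.2 (levelCount_le_choose prefixFamily_subset_powerset i)

/-- `P` dominates `Q` iff every clopen set represented by `P`
has a clopen subset represented by `Q`. -/
theorem dominates_iff_subset (P Q : Polynomial ℤ)
    (hP : IsPartitionPolynomial P) (hQ : IsPartitionPolynomial Q) :
    Dominates P Q ↔
      ∀ A : Set (ℕ → Bool), IsClopen A → Represents P A →
        ∃ B : Set (ℕ → Bool), B ⊆ A ∧ IsClopen B ∧ Represents Q B := by
  refine ⟨fun hPQ A hA hPA => ?_, fun h => ?_⟩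
  · obtain ⟨C, D, hDC, hC, hD, hPC, hQD⟩ := hPQ.exists_represents_subset
    exact exists_subset_represents hP hQ hA hC hD hDC hPA hPC hQD
  · obtain ⟨A, -, -, hA, -, hPA, -⟩ := hP.dominates_self.exists_represents_subset
    obtain ⟨B, hBA, hB, hQB⟩ := h A hA hPA
    exact dominates_of_represents_subset hP hQ hA hB hBA hPA hQB
end

section
/- For every s ∈ [0,1] and every i ∈ ℕ, the set of values μ_s(B) over clopen subsets B of the cylinder A_i = {x ∈ Ω : x_i = 1} is exactly the set of values s · P(s) where P ranges over partition polynomials. -/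
open MeasureTheory Polynomial

/-- The cylinder `A_i = {x ∈ Ω : x i = 1}`. -/
def cylinderOne (i : ℕ) : Set (ℕ → Bool) := {x : ℕ → Bool | x i = true}

/-!
A clopen set in `ℕ → Bool` is compact and open, so membership in it depends on finitely many
coordinates. Hence a clopen `B ⊆ A_i` is a disjoint union of cylinders
`{x | x i = 1, x = 1_S on G}` for a finite `G ∌ i` and a family `𝒮` of subsets `S ⊆ G`. Such a
cylinder has measure `s ^ (|S| + 1) * (1 - s) ^ (|G| - |S|)`, so grouping by `|S| = k` gives
`μ B = s * P(s)` for the partition polynomial whose `k`-th coefficient, the number of `S ∈ 𝒮` of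
size `k`, is at most `C(|G|, k)`. Conversely, coefficients `a_k ≤ C(n, k)` are realised by picking
`a_k` subsets of size `k` of an `n`-element set `G ∌ i`.
-/

open Finset

theorem IsCompact.exists_finset_dependsOn_mem {ι : Type*} {X : ι → Type*}
    [∀ j, TopologicalSpace (X j)] [∀ j, DiscreteTopology (X j)] {B : Set (∀ j, X j)}
    (hc : IsCompact B) (ho : IsOpen B) : ∃ F : Finset ι, DependsOn (· ∈ B) (F : Set ι) := by
  classical
  have hbox : ∀ x ∈ B, ∃ I : Finset ι, (I : Set ι).pi (fun j => {x j}) ⊆ B := by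
    intro x hx
    obtain ⟨I, u, hu, hIu⟩ := isOpen_pi_iff.1 ho x hx
    exact ⟨I, fun y hy => hIu fun j hj => (hy j hj) ▸ (hu j hj).2⟩
  choose I hI using hbox
  obtain ⟨t, hcover⟩ := hc.elim_nhds_subcover' (fun x hx => (I x hx : Set ι).pi fun j => {x j})
    fun x hx => (isOpen_set_pi (I x hx).finite_toSet fun j _ => isOpen_discrete _).mem_nhds
      fun j _ => rfl
  have hmem : ∀ x y : ∀ j, X j, (∀ j ∈ t.sup fun z => I z.1 z.2, x j = y j) → x ∈ B → y ∈ B := by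
    intro x y hxy hx
    obtain ⟨z, hz, hxz⟩ := Set.mem_iUnion₂.1 (hcover hx)
    refine hI z.1 z.2 fun j hj => ?_
    rw [Set.mem_singleton_iff, ← hxy j (Finset.le_sup (f := fun z => I z.1 z.2) hz hj)]
    exact hxz j hj
  exact ⟨t.sup fun z => I z.1 z.2, fun x y hxy =>
    propext ⟨hmem x y hxy, hmem y x fun j hj => (hxy j hj).symm⟩⟩

def cylinderOn (F T : Finset ℕ) : Set (ℕ → Bool) := {x | ∀ j ∈ F, x j = decide (j ∈ T)}

theorem isClopen_cylinderOn (F T : Finset ℕ) : IsClopen (cylinderOn F T) := by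
  have : cylinderOn F T = (F : Set ℕ).pi fun j => {decide (j ∈ T)} := by
    ext x; simp [cylinderOn]
  rw [this]
  exact ⟨isClosed_set_pi fun j _ => isClosed_discrete _,
    isOpen_set_pi F.finite_toSet fun j _ => isOpen_discrete _⟩

theorem measurableSet_cylinderOn (F T : Finset ℕ) : MeasurableSet (cylinderOn F T) :=
  (isClopen_cylinderOn F T).isOpen.measurableSet

theorem pairwiseDisjoint_cylinderOn (F : Finset ℕ) :
    (F.powerset : Set (Finset ℕ)).PairwiseDisjoint (cylinderOn F) := by
  intro T hT T' hT' hne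
  refine Set.disjoint_left.2 fun x hx hx' => hne (Finset.ext fun j => ?_)
  by_cases hj : j ∈ F
  · simpa using (hx j hj).symm.trans (hx' j hj)
  · exact iff_of_false (fun h => hj (mem_powerset.1 hT h)) (fun h => hj (mem_powerset.1 hT' h))

theorem IsBernoulli.measure_cylinderOn {r : ℝ} {μ : Measure (ℕ → Bool)} (hμ : IsBernoulli r μ)
    {F T : Finset ℕ} (hTF : T ⊆ F) :
    μ (cylinderOn F T) = ENNReal.ofReal (r ^ #T * (1 - r) ^ (#F - #T)) := by
  have htrue : {j ∈ F | decide (j ∈ T) = true} = T := by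
    simpa [filter_mem_eq_inter] using hTF
  have hfalse : {j ∈ F | decide (j ∈ T) = false} = F \ T := by
    ext j; simp
  rw [cylinderOn, hμ F, htrue, hfalse, card_sdiff_of_subset hTF]

noncomputable def partitionPoly (n : ℕ) (a : ℕ → ℤ) : ℤ[X] :=
  ∑ k ∈ range (n + 1), C (a k) * X ^ k * (1 - X) ^ (n - k)

theorem aeval_partitionPoly {R : Type*} [CommRing R] (x : R) (n : ℕ) (a : ℕ → ℤ) :
    aeval x (partitionPoly n a) = ∑ k ∈ range (n + 1), (a k : R) * x ^ k * (1 - x) ^ (n - k) := by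
  simp [partitionPoly]

theorem sum_card_eq_sum_range_card_filter {M : Type*} [AddCommMonoid M] {G : Finset ℕ}
    {𝒮 : Finset (Finset ℕ)} (h𝒮 : 𝒮 ⊆ G.powerset) (f : ℕ → M) :
    ∑ S ∈ 𝒮, f #S = ∑ k ∈ range (#G + 1), #{S ∈ 𝒮 | #S = k} • f k := by
  rw [← sum_fiberwise_of_maps_to (g := card) (t := range (#G + 1))
    fun S hS => mem_range_succ_iff.2 (card_le_card (mem_powerset.1 (h𝒮 hS)))]
  refine sum_congr rfl fun k _ => ?_
  rw [sum_congr rfl fun S hS => congrArg f (mem_filter.1 hS).2, sum_const]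

theorem mul_aeval_partitionPoly_card_filter {R : Type*} [CommRing R] (x : R) {G : Finset ℕ}
    {𝒮 : Finset (Finset ℕ)} (h𝒮 : 𝒮 ⊆ G.powerset) :
    x * aeval x (partitionPoly #G fun k => #{S ∈ 𝒮 | #S = k}) =
      ∑ S ∈ 𝒮, x ^ (#S + 1) * (1 - x) ^ (#G - #S) := by
  rw [sum_card_eq_sum_range_card_filter h𝒮 fun k => x ^ (k + 1) * (1 - x) ^ (#G - k),
    aeval_partitionPoly, mul_sum]
  refine sum_congr rfl fun k _ => ?_
  push_cast
  rw [nsmul_eq_mul]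
  ring

theorem IsBernoulli.measure_biUnion_cylinderOn_insert {r : ℝ} {μ : Measure (ℕ → Bool)}
    (hμ : IsBernoulli r μ) (hr : r ∈ Set.Icc (0 : ℝ) 1) {i : ℕ} {G : Finset ℕ} (hiG : i ∉ G)
    {𝒮 : Finset (Finset ℕ)} (h𝒮 : 𝒮 ⊆ G.powerset) :
    μ (⋃ S ∈ 𝒮, cylinderOn (insert i G) (insert i S)) =
      ENNReal.ofReal (r * aeval r (partitionPoly #G fun k => #{S ∈ 𝒮 | #S = k})) := by
  have hsub : ∀ S ∈ 𝒮, S ⊆ G := fun S hS => mem_powerset.1 (h𝒮 hS)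
  have hiS : ∀ S ∈ 𝒮, i ∉ S := fun S hS h => hiG (hsub S hS h)
  have hdisj : (𝒮 : Set (Finset ℕ)).PairwiseDisjoint
      fun S => cylinderOn (insert i G) (insert i S) := fun S hS S' hS' hne =>
    pairwiseDisjoint_cylinderOn _ (mem_powerset.2 (insert_subset_insert i (hsub S hS)))
      (mem_powerset.2 (insert_subset_insert i (hsub S' hS')))
      fun h => hne (by rw [← erase_insert (hiS S hS), h, erase_insert (hiS S' hS')])
  rw [measure_biUnion_finset hdisj fun S _ => measurableSet_cylinderOn _ _,
    mul_aeval_partitionPoly_card_filter r h𝒮,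
    ENNReal.ofReal_sum_of_nonneg fun S _ =>
      mul_nonneg (pow_nonneg hr.1 _) (pow_nonneg (sub_nonneg.2 hr.2) _)]
  refine sum_congr rfl fun S hS => ?_
  rw [hμ.measure_cylinderOn (insert_subset_insert i (hsub S hS)), card_insert_of_notMem hiG,
    card_insert_of_notMem (hiS S hS), Nat.add_sub_add_right]

theorem isPartitionPolynomial_partitionPoly_card_filter {G : Finset ℕ}
    {𝒮 : Finset (Finset ℕ)} (h𝒮 : 𝒮 ⊆ G.powerset) :
    IsPartitionPolynomial (partitionPoly #G fun k => #{S ∈ 𝒮 | #S = k}) := by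
  refine ⟨#G, _, fun k _ => ⟨Int.natCast_nonneg _, ?_⟩, rfl⟩
  rw [← card_powersetCard]
  refine Int.ofNat_le.2 (card_le_card fun S hS => ?_)
  obtain ⟨hS𝒮, rfl⟩ := mem_filter.1 hS
  exact mem_powersetCard.2 ⟨mem_powerset.1 (h𝒮 hS𝒮), rfl⟩

theorem exists_subset_powerset_card_filter_card_eq {α : Type*} [DecidableEq α] (G : Finset α)
    (a : ℕ → ℕ) (ha : ∀ k ≤ #G, a k ≤ (#G).choose k) :
    ∃ 𝒮 ⊆ G.powerset, ∀ k ≤ #G, #{S ∈ 𝒮 | #S = k} = a k := by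
  have hlayer : ∀ k, ∃ 𝒯 ⊆ G.powersetCard k, #𝒯 = min (a k) ((#G).choose k) := fun k =>
    exists_subset_card_eq (by rw [card_powersetCard]; exact min_le_right _ _)
  choose 𝒯 h𝒯 h𝒯card using hlayer
  refine ⟨{S ∈ G.powerset | S ∈ 𝒯 #S}, filter_subset _ _, fun k hk => ?_⟩
  have hfilter : {S ∈ {S ∈ G.powerset | S ∈ 𝒯 #S} | #S = k} = 𝒯 k := by
    ext S
    simp only [mem_filter, mem_powerset]
    constructor
    · rintro ⟨⟨-, hS⟩, rfl⟩
      exact hS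
    · intro hS
      obtain ⟨hSG, rfl⟩ := mem_powersetCard.1 (h𝒯 k hS)
      exact ⟨⟨hSG, hS⟩, rfl⟩
  rw [hfilter, h𝒯card, min_eq_left (ha k hk)]

theorem exists_eq_biUnion_cylinderOn_insert_of_dependsOn {B : Set (ℕ → Bool)} {i : ℕ}
    {G : Finset ℕ} (hB : DependsOn (· ∈ B) (↑(insert i G) : Set ℕ)) (hBi : B ⊆ cylinderOne i) :
    ∃ 𝒮 ⊆ G.powerset, B = ⋃ S ∈ 𝒮, cylinderOn (insert i G) (insert i S) := by
  classical
  refine ⟨{S ∈ G.powerset | (fun j => decide (j ∈ insert i S)) ∈ B}, filter_subset _ _, ?_⟩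
  ext x
  simp only [Set.mem_iUnion, mem_filter, mem_powerset, exists_prop]
  constructor
  · intro hx
    have hagree : x ∈ cylinderOn (insert i G) (insert i {j ∈ G | x j = true}) := by
      intro j hj
      by_cases hji : j = i
      · subst hji
        have hxj : x j = true := hBi hx
        simp [hxj]
      · simp [hji, (mem_insert.1 hj).resolve_left hji]
    exact ⟨_, ⟨filter_subset _ _, (hB hagree).mp hx⟩, hagree⟩
  · rintro ⟨S, ⟨-, hS⟩, hxS⟩
    exact (hB hxS).mpr hS

theorem IsClopen.exists_eq_biUnion_cylinderOn_insert {B : Set (ℕ → Bool)} (hB : IsClopen B)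
    {i : ℕ} (hBi : B ⊆ cylinderOne i) :
    ∃ G : Finset ℕ, i ∉ G ∧ ∃ 𝒮 ⊆ G.powerset,
      B = ⋃ S ∈ 𝒮, cylinderOn (insert i G) (insert i S) := by
  obtain ⟨F, hF⟩ := hB.isClosed.isCompact.exists_finset_dependsOn_mem hB.isOpen
  exact ⟨F.erase i, notMem_erase i F, exists_eq_biUnion_cylinderOn_insert_of_dependsOn
    (hF.mono (coe_subset.2 (insert_erase_subset i F))) hBi⟩

theorem biUnion_cylinderOn_insert_subset_cylinderOne (i : ℕ) (G : Finset ℕ)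
    (𝒮 : Finset (Finset ℕ)) : ⋃ S ∈ 𝒮, cylinderOn (insert i G) (insert i S) ⊆ cylinderOne i :=
  Set.iUnion₂_subset fun S _ x hx => show x i = true by simpa using hx i (mem_insert_self i G)

/-- the values `μ_s(B)` over clopen subsets `B` of the cylinder
`A_i` are exactly the values `s * P(s)` for `P` a partition polynomial. -/
theorem measures_of_clopen_subsets_of_cylinder
    (s : ℝ) (hs : s ∈ Set.Icc (0 : ℝ) 1)
    (μ : Measure (ℕ → Bool)) (hμ : IsBernoulli s μ) (i : ℕ) :
    {t : ENNReal | ∃ B : Set (ℕ → Bool), IsClopen B ∧ B ⊆ cylinderOne i ∧ μ B = t} =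
      {t : ENNReal | ∃ P : Polynomial ℤ, IsPartitionPolynomial P ∧
        t = ENNReal.ofReal (s * aeval s P)} := by
  ext t
  constructor
  · rintro ⟨B, hB, hBi, rfl⟩
    obtain ⟨G, hiG, 𝒮, h𝒮, rfl⟩ := hB.exists_eq_biUnion_cylinderOn_insert hBi
    exact ⟨_, isPartitionPolynomial_partitionPoly_card_filter h𝒮,
      hμ.measure_biUnion_cylinderOn_insert hs hiG h𝒮⟩
  · rintro ⟨P, ⟨n, a, ha, rfl⟩, rfl⟩
    set G := Ioc i (i + n)
    have hG : #G = n := by simp [G]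
    obtain ⟨𝒮, h𝒮, hcount⟩ := exists_subset_powerset_card_filter_card_eq G (fun k => (a k).toNat)
      fun k hk => by rw [hG] at hk ⊢; exact Int.toNat_le.2 (ha k hk).2
    have hpoly : partitionPoly n (fun k => (#{S ∈ 𝒮 | #S = k} : ℤ)) = partitionPoly n a :=
      sum_congr rfl fun k hk => by
        have hk : k ≤ n := mem_range_succ_iff.1 hk
        dsimp only
        rw [hcount k (hG ▸ hk), Int.toNat_of_nonneg (ha k hk).1]
    refine ⟨_, isClopen_biUnion_finset fun S _ => isClopen_cylinderOn _ _,
      biUnion_cylinderOn_insert_subset_cylinderOne i G 𝒮, ?_⟩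
    rw [hμ.measure_biUnion_cylinderOn_insert hs (by simp [G]) h𝒮, hG, hpoly]
    rfl
end

section
/- Let r ∈ (0,1) be such that (1−r)/r is not integral over ℤ (i.e., is not an algebraic integer). Then there is no partition polynomial P with P(r) = 1/2. -/
open MeasureTheory Polynomial

/-! Put `β = (1 - r) / r`. Then `r ^ i * (1 - r) ^ (n - i) = r ^ n * β ^ (n - i)` and
`1 = r ^ n * (1 + β) ^ n`, so for `P = ∑ a_i X^i (1 - X)^(n-i)` we get
`1 - 2 P(r) = r ^ n * q(β)` with `q = (X + 1) ^ n - 2 ∑ a_i X^(n-i) ∈ ℤ[X]`.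
The `X^n`-coefficient of `q` is `1 - 2 a_0 = ±1`, because `a_0 ∈ {0, 1}`.
Hence `P(r) = 1/2` makes `β` a root of `±q`, a monic integer polynomial. -/

theorem IsIntegral.of_aeval_eq_zero_of_isUnit_coeff {R A : Type*} [CommRing R] [Ring A]
    [Algebra R A] {x : A} {p : R[X]} {n : ℕ} (hdeg : p.natDegree ≤ n)
    (hunit : IsUnit (p.coeff n)) (hx : aeval x p = 0) : IsIntegral R x := by
  obtain ⟨u, hu⟩ := hunit
  refine ⟨C ↑u⁻¹ * p, monic_of_natDegree_le_of_coeff_eq_one n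
    (natDegree_C_mul_le _ _ |>.trans hdeg) (by simp [← hu]), ?_⟩
  rw [← aeval_def, map_mul, hx, mul_zero]

section Reflect

variable {R : Type*} [Semiring R] (n : ℕ) (a : ℕ → R)

theorem coeff_sum_C_mul_X_pow_sub :
    (∑ i ∈ Finset.range (n + 1), C (a i) * X ^ (n - i)).coeff n = a 0 := by
  rw [finsetSum_coeff, Finset.sum_eq_single 0]
  · simp
  · intro i hi hi0
    rw [coeff_C_mul_X_pow, if_neg (by have := Finset.mem_range_succ_iff.mp hi; omega)]
  · simp

theorem natDegree_sum_C_mul_X_pow_sub_le :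
    (∑ i ∈ Finset.range (n + 1), C (a i) * X ^ (n - i)).natDegree ≤ n :=
  natDegree_sum_le_of_forall_le _ _ fun i _ =>
    (natDegree_C_mul_X_pow_le _ _).trans (Nat.sub_le n i)

end Reflect

section Field

variable {R K : Type*} [CommRing R] [Field K] [Algebra R K] {r : K}

theorem pow_mul_one_sub_pow_eq (hr : r ≠ 0) {i n : ℕ} (hi : i ≤ n) :
    r ^ i * (1 - r) ^ (n - i) = r ^ n * ((1 - r) / r) ^ (n - i) := by
  rw [div_pow, mul_div_assoc', ← pow_mul_pow_sub r hi]
  field_simp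

theorem aeval_sum_X_pow_mul_one_sub_X_pow (hr : r ≠ 0) (n : ℕ) (a : ℕ → R) :
    aeval r (∑ i ∈ Finset.range (n + 1), C (a i) * X ^ i * (1 - X) ^ (n - i)) =
      r ^ n * aeval ((1 - r) / r) (∑ i ∈ Finset.range (n + 1), C (a i) * X ^ (n - i)) := by
  simp only [map_sum, Finset.mul_sum, map_mul, map_pow, aeval_C, aeval_X, map_sub, map_one]
  refine Finset.sum_congr rfl fun i hi => ?_
  rw [mul_assoc, pow_mul_one_sub_pow_eq hr (Finset.mem_range_succ_iff.mp hi)]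
  ring

theorem pow_mul_aeval_X_add_one_pow (hr : r ≠ 0) (n : ℕ) :
    r ^ n * aeval ((1 - r) / r) ((X + 1 : R[X]) ^ n) = 1 := by
  rw [map_pow, ← mul_pow, map_add, aeval_X, map_one, div_add_one hr, sub_add_cancel,
    mul_one_div_cancel hr, one_pow]

end Field

theorem IsPartitionPolynomial.isIntegral_of_two_mul_aeval_eq_one {K : Type*} [Field K] {r : K}
    {P : ℤ[X]} (hP : IsPartitionPolynomial P) (hr : r ≠ 0) (h : 2 * aeval r P = 1) :
    IsIntegral ℤ ((1 - r) / r) := by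
  obtain ⟨n, a, ha, rfl⟩ := hP
  set Q := ∑ i ∈ Finset.range (n + 1), C (a i) * X ^ (n - i) with hQ
  have hroot : aeval ((1 - r) / r) ((X + 1) ^ n - C 2 * Q) = 0 := by
    have key : r ^ n * aeval ((1 - r) / r) ((X + 1) ^ n - C 2 * Q) =
        1 - 2 * aeval r (∑ i ∈ Finset.range (n + 1), C (a i) * X ^ i * (1 - X) ^ (n - i)) := by
      rw [aeval_sum_X_pow_mul_one_sub_X_pow hr, map_sub, mul_sub, pow_mul_aeval_X_add_one_pow hr,
        map_mul, aeval_C, ← hQ]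
      simp only [eq_intCast, Int.cast_ofNat]
      ring
    rwa [h, sub_self, mul_eq_zero, or_iff_right (pow_ne_zero _ hr)] at key
  have hdeg : ((X + 1) ^ n - C 2 * Q).natDegree ≤ n :=
    (natDegree_sub_le _ _).trans <| max_le (by rw [← C_1, natDegree_pow_X_add_C])
      ((natDegree_C_mul_le _ _).trans (natDegree_sum_C_mul_X_pow_sub_le n a))
  have hcoeff : ((X + 1) ^ n - C 2 * Q).coeff n = 1 - 2 * a 0 := by
    rw [coeff_sub, coeff_X_add_one_pow, coeff_C_mul, coeff_sum_C_mul_X_pow_sub, Nat.choose_self,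
      Nat.cast_one]
  have hunit : IsUnit (1 - 2 * a 0) := by
    have ha0 := ha 0 n.zero_le
    rw [Nat.choose_zero_right, Nat.cast_one] at ha0
    rw [Int.isUnit_iff]
    omega
  exact .of_aeval_eq_zero_of_isUnit_coeff hdeg (hcoeff ▸ hunit) hroot

theorem no_partition_polynomial_half_general (r : ℝ)
    (hβ : ¬ IsIntegral ℤ ((1 - r) / r)) :
    ¬ ∃ P : Polynomial ℤ, IsPartitionPolynomial P ∧ aeval r P = (1 / 2 : ℝ) := by
  rintro ⟨P, hP, hval⟩
  -- at `r = 0` the junk value `(1 - 0) / 0 = 0` is integral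
  have hr : r ≠ 0 := by
    rintro rfl
    exact hβ (by simpa using isIntegral_zero)
  exact hβ (hP.isIntegral_of_two_mul_aeval_eq_one hr (by rw [hval]; norm_num))

/-- if `r ∈ (0,1)` and `(1-r)/r` is not an algebraic integer,
then no partition polynomial takes the value `1/2` at `r`. -/
theorem no_partition_polynomial_half (r : ℝ) (hr : r ∈ Set.Ioo (0 : ℝ) 1)
    (hβ : ¬ IsIntegral ℤ ((1 - r) / r)) :
    ¬ ∃ P : Polynomial ℤ, IsPartitionPolynomial P ∧ aeval r P = (1 / 2 : ℝ) :=
  no_partition_polynomial_half_general r hβ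
end

section
/- Let r, s ∈ (0,1) satisfy s = 2r(1−r) and r = 3s(1−s)² + 3s²(1−s). Then the number β = 1/r − 1 is not integral over ℤ (i.e., β is not an algebraic integer). -/
open Polynomial

/-- No rational number has cube equal to 4. -/
lemma no_rat_cube_four (b : ℚ) : b ^ 3 ≠ 4 := by
  intro hb
  have hx : ((b : ℝ)) ^ 3 = ((4 : ℤ) : ℝ) := by exact_mod_cast congrArg (fun t : ℚ => (t : ℝ)) hb
  rcases Classical.em (∃ y : ℤ, (b : ℝ) = y) with ⟨y, hy⟩ | h
  · have hy' : (y : ℝ) ^ 3 = 4 := by rw [← hy]; exact_mod_cast hx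
    have hyy : (y : ℤ) ^ 3 = 4 := by exact_mod_cast hy'
    rcases le_or_gt y 1 with h1 | h1
    · nlinarith [hyy, sq_nonneg (2 * y + 1)]
    · nlinarith [hyy, sq_nonneg (y + 1)]
  · exact (Rat.not_irrational b) (irrational_nrt_of_notint_nrt 3 4 hx h (by norm_num))

/-- if `r, s ∈ (0,1)` satisfy `s = 2r(1-r)` and
`r = 3s(1-s)² + 3s²(1-s)`, then `β = 1/r - 1` is not an algebraic integer. -/
theorem beta_not_algebraic_integer (r s : ℝ)
    (hr : r ∈ Set.Ioo (0 : ℝ) 1) (hs : s ∈ Set.Ioo (0 : ℝ) 1)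
    (h1 : s = 2 * r * (1 - r)) (h2 : r = 3 * s * (1 - s) ^ 2 + 3 * s ^ 2 * (1 - s)) :
    ¬ IsIntegral ℤ (1 / r - 1) := by
  obtain ⟨hr0, hr1⟩ := hr
  have hrne : r ≠ 0 := ne_of_gt hr0
  -- the cubic satisfied by r
  have key : r * (12 * r ^ 3 - 24 * r ^ 2 + 18 * r - 5) = 0 := by
    subst h1; linear_combination h2
  have hcube : 12 * r ^ 3 - 24 * r ^ 2 + 18 * r - 5 = 0 :=
    (mul_eq_zero.mp key).resolve_left hrne
  set β : ℝ := 1 / r - 1 with hβdef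
  have hβroot : 5 * β ^ 3 - 3 * β ^ 2 + 3 * β - 1 = 0 := by
    have h3 : r ^ 3 ≠ 0 := pow_ne_zero _ hrne
    have expand : r ^ 3 * (5 * β ^ 3 - 3 * β ^ 2 + 3 * β - 1)
        = -(12 * r ^ 3 - 24 * r ^ 2 + 18 * r - 5) := by
      rw [hβdef]; field_simp; ring
    have h0 : r ^ 3 * (5 * β ^ 3 - 3 * β ^ 2 + 3 * β - 1) = 0 := by
      rw [expand, hcube, neg_zero]
    exact (mul_eq_zero.mp h0).resolve_left h3
  intro hβ
  -- the candidate minimal polynomial over ℚ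
  set q : ℚ[X] := X ^ 3 - C (3/5) * X ^ 2 + C (3/5) * X - C (1/5) with hq
  have hqdeg : q.natDegree = 3 := by rw [hq]; compute_degree!
  have hqmonic : q.Monic := by rw [hq]; monicity!
  have hqaeval : aeval β q = 0 := by
    rw [hq]
    simp only [map_sub, map_add, map_mul, map_pow, aeval_X, aeval_C]
    have e1 : ((algebraMap ℚ ℝ) (3/5 : ℚ)) = 3/5 := by
      norm_num
    have e2 : ((algebraMap ℚ ℝ) (1/5 : ℚ)) = 1/5 := by
      norm_num
    rw [e1, e2]
    linear_combination hβroot / 5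
  have hqirr : Irreducible q := by
    rw [Polynomial.irreducible_iff_roots_eq_zero_of_degree_le_three (by omega) (by omega)]
    rw [Multiset.eq_zero_iff_forall_notMem]
    intro a ha
    rw [mem_roots hqmonic.ne_zero, IsRoot.def, hq] at ha
    simp only [eval_sub, eval_add, eval_mul, eval_pow, eval_X, eval_C] at ha
    have ha0 : a ≠ 0 := by intro h; rw [h] at ha; norm_num at ha
    apply no_rat_cube_four (1 / a - 1)
    field_simp
    ring_nf
    ring_nf at ha
    linear_combination (-5 : ℚ) * ha
  have hmin : minpoly ℚ β = q :=
    (minpoly.eq_of_irreducible_of_monic hqirr hqaeval hqmonic).symm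
  have hmap : minpoly ℚ β = (minpoly ℤ β).map (algebraMap ℤ ℚ) :=
    minpoly.isIntegrallyClosed_eq_field_fractions' ℚ hβ
  have hc2 := congrArg (fun p : ℚ[X] => p.coeff 2) (hmap.symm.trans hmin)
  simp only [coeff_map, hq, coeff_sub, coeff_add, coeff_C_mul, coeff_X_pow, coeff_X, coeff_C,
    algebraMap_int_eq, eq_intCast] at hc2
  norm_num at hc2
  have h5 : (5 : ℚ) * ((minpoly ℤ β).coeff 2 : ℚ) = -3 := by rw [hc2]; norm_num
  have h5' : (5 * (minpoly ℤ β).coeff 2 : ℤ) = -3 := by exact_mod_cast h5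
  omega
end

section
/- Let r ∈ (0,1), let m ∈ ℕ, and let K be a partition polynomial such that (1−r)^m = 2·K(2r(1−r)). Then β = (1−r)/r is integral over ℤ (i.e., β is an algebraic integer). -/
open MeasureTheory Polynomial

/-! With `β = (1 - r) / r` one has `r (1 + β) = 1`, `1 - r = r β`, `2r(1 - r) = 2 r² β` and
`1 - 2r(1 - r) = r² (1 + β²)`. Substituting into `K = ∑ aᵢ Xⁱ (1 - X)ⁿ⁻ⁱ` and multiplying the
equation by `(1 + β)^(m + 2n)` gives
`β^m (1 + β)^(2n) = 2 (1 + β)^m ∑ aᵢ 2ⁱ βⁱ (1 + β²)ⁿ⁻ⁱ`,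
an integer polynomial equation of degree `m + 2n` whose top coefficient `1 - 2a₀` is `±1`,
since `0 ≤ a₀ ≤ C(n, 0) = 1`. -/

theorem isIntegral_of_aeval_eq_zero_of_isUnit_coeff {R A : Type*} [CommRing R] [Ring A]
    [Algebra R A] {p : R[X]} {d : ℕ} {x : A} (hdeg : p.natDegree ≤ d) (hd : IsUnit (p.coeff d))
    (hx : aeval x p = 0) : IsIntegral R x := by
  obtain ⟨u, hu⟩ := hd
  refine ⟨C ↑u⁻¹ * p, monic_of_natDegree_le_of_coeff_eq_one d
    ((natDegree_C_mul_le _ _).trans hdeg) ?_, ?_⟩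
  · rw [coeff_C_mul, ← hu, Units.inv_mul]
  · rw [← aeval_def, map_mul, hx, mul_zero]

noncomputable def betaPolynomial (n : ℕ) (a : ℕ → ℤ) : ℤ[X] :=
  ∑ i ∈ Finset.range (n + 1), C (a i * 2 ^ i) * X ^ i * (1 + X ^ 2) ^ (n - i)

noncomputable def betaRelation (m n : ℕ) (a : ℕ → ℤ) : ℤ[X] :=
  X ^ m * (1 + X) ^ (2 * n) - 2 * (1 + X) ^ m * betaPolynomial n a

section Degree

variable (m n : ℕ) (a : ℕ → ℤ)

theorem natDegree_betaPolynomial_term_le (c : ℤ) (i : ℕ) :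
    (C c * X ^ i * (1 + X ^ 2 : ℤ[X]) ^ (n - i)).natDegree ≤ i + 2 * (n - i) := by
  refine natDegree_mul_le_of_le (natDegree_C_mul_X_pow_le c i) ?_
  rw [mul_comm 2]
  exact natDegree_pow_le_of_le _ (by compute_degree)

theorem natDegree_betaPolynomial_le : (betaPolynomial n a).natDegree ≤ 2 * n := by
  refine natDegree_sum_le_of_forall_le _ _ fun i hi => ?_
  have := Finset.mem_range_succ_iff.mp hi
  exact (natDegree_betaPolynomial_term_le n _ i).trans (by omega)

theorem coeff_betaPolynomial_two_mul : (betaPolynomial n a).coeff (2 * n) = a 0 := by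
  rw [betaPolynomial, finsetSum_coeff, Finset.sum_eq_single_of_mem 0 (by simp)]
  · have h : ((1 + X ^ 2 : ℤ[X]) ^ n).coeff (n * 2) = 1 := by
      rw [coeff_pow_of_natDegree_le (by compute_degree)]
      simp [coeff_one]
    simp [mul_comm 2 n, h]
  · intro i hi hi0
    have := Finset.mem_range_succ_iff.mp hi
    exact coeff_eq_zero_of_natDegree_lt
      ((natDegree_betaPolynomial_term_le n _ i).trans_lt (by omega))

theorem natDegree_betaRelation_le : (betaRelation m n a).natDegree ≤ m + 2 * n := by
  have := natDegree_betaPolynomial_le n a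
  unfold betaRelation
  compute_degree
  omega

theorem coeff_betaRelation : (betaRelation m n a).coeff (m + 2 * n) = 1 - 2 * a 0 := by
  rw [betaRelation, coeff_sub, coeff_X_pow_mul', mul_assoc, coeff_ofNat_mul,
    coeff_mul_add_eq_of_natDegree_le (by compute_degree) (natDegree_betaPolynomial_le n a),
    coeff_betaPolynomial_two_mul]
  simp [coeff_one_add_X_pow]

end Degree

section Evaluation

variable {A : Type*} [CommRing A] {m n : ℕ} {a : ℕ → ℤ} {r β : A}

theorem aeval_partition_eq_pow_mul_aeval_betaPolynomial (h : r * (1 + β) = 1) :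
    aeval (2 * r * (1 - r))
        (∑ i ∈ Finset.range (n + 1), C (a i) * X ^ i * (1 - X) ^ (n - i) : ℤ[X]) =
      r ^ (2 * n) * aeval β (betaPolynomial n a) := by
  have hx : 2 * r * (1 - r) = 2 * r ^ 2 * β := by linear_combination (-2 * r) * h
  have hy : 1 - 2 * r * (1 - r) = r ^ 2 * (1 + β ^ 2) := by
    linear_combination (r - 1 - r * β) * h
  simp only [betaPolynomial, map_sum, map_mul, map_pow, map_sub, map_add, map_one, aeval_C,
    aeval_X, map_ofNat, Finset.mul_sum, hy]
  refine Finset.sum_congr rfl fun i hi => ?_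
  obtain ⟨j, rfl⟩ := Nat.exists_eq_add_of_le (Finset.mem_range_succ_iff.mp hi)
  rw [Nat.add_sub_cancel_left, hx]
  simp only [mul_pow]
  ring

theorem aeval_betaRelation_eq_zero (h : r * (1 + β) = 1)
    (heq : (1 - r) ^ m = 2 * aeval (2 * r * (1 - r))
      (∑ i ∈ Finset.range (n + 1), C (a i) * X ^ i * (1 - X) ^ (n - i) : ℤ[X])) :
    aeval β (betaRelation m n a) = 0 := by
  have hr : IsUnit (r ^ (m + 2 * n)) := (IsUnit.of_mul_eq_one _ h).pow _
  refine hr.mul_right_eq_zero.mp ?_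
  have h1 : 1 - r = r * β := by linear_combination -h
  calc r ^ (m + 2 * n) * aeval β (betaRelation m n a)
      = (r * β) ^ m * (r * (1 + β)) ^ (2 * n)
          - 2 * (r * (1 + β)) ^ m * (r ^ (2 * n) * aeval β (betaPolynomial n a)) := by
        simp only [betaRelation, map_sub, map_mul, map_pow, map_add, map_one, map_ofNat, aeval_X,
          mul_pow, pow_add]
        ring
    _ = 0 := by
        rw [← aeval_partition_eq_pow_mul_aeval_betaPolynomial h, h, ← h1, heq]
        ring

end Evaluation

/-- if `r ∈ (0,1)`, `m ∈ ℕ` and `K` is a partition polynomial with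
`(1-r)^m = 2 K(2r(1-r))`, then `β = (1-r)/r` is an algebraic integer. -/
theorem beta_integral_of_equation (r : ℝ) (hr : r ∈ Set.Ioo (0 : ℝ) 1)
    (m : ℕ) (K : Polynomial ℤ) (hK : IsPartitionPolynomial K)
    (heq : (1 - r) ^ m = 2 * aeval (2 * r * (1 - r)) K) :
    IsIntegral ℤ ((1 - r) / r) := by
  obtain ⟨n, a, ha, rfl⟩ := hK
  have hβ : r * (1 + (1 - r) / r) = 1 := by field_simp [hr.1.ne']; ring
  have ha0 : a 0 = 0 ∨ a 0 = 1 := by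
    have := ha 0 n.zero_le
    rw [Nat.choose_zero_right, Nat.cast_one] at this
    omega
  refine isIntegral_of_aeval_eq_zero_of_isUnit_coeff (natDegree_betaRelation_le m n a) ?_
    (aeval_betaRelation_eq_zero hβ heq)
  rw [coeff_betaRelation, Int.isUnit_iff]
  omega
end

section
/- Let F be a polynomial with integer coefficients such that F(0) = 0, the coefficient of X in F is nonzero, and there is a prime p ≠ 2 dividing every coefficient of F while p² divides none of the nonzero coefficients of F. If r ∈ (0,1) satisfies r = F(2r(1−r)), then 1/r is not integral over ℤ (i.e., 1/r is not an algebraic integer). -/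
/-!
`r` is a root of `Y - F(2Y(1 - Y))`, so `α = 1/r` is a root of its reversal `P`. As `p` divides
every coefficient of `F`, `P` is Eisenstein at `p`: its leading coefficient `1 - 2 F'(0)` is `1`
mod `p`, the other coefficients are divisible by `p`, and its constant term
`-lc(F) (-2)^deg F` is not divisible by `p²` since `p` is odd. Moreover `P(1) = 1`, so `P` is
primitive and hence irreducible in `ℤ[X]`. If `α` were integral, its monic minimal polynomial
would divide `P`, hence be associated to it, and `1 - 2 F'(0)` would be `±1`; this is impossible
because `F'(0)` is a nonzero multiple of `p`.
-/

open Polynomial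

namespace Polynomial

theorem coeff_one_comp_of_coeff_zero_eq_zero {R : Type*} [CommRing R] (p : R[X]) {q : R[X]}
    (hq : q.coeff 0 = 0) : (p.comp q).coeff 1 = p.coeff 1 * q.coeff 1 := by
  have h (f : R[X]) : f.coeff 1 = f.derivative.eval 0 := by
    simp [← coeff_zero_eq_eval_zero, coeff_derivative]
  have hq' : q.eval 0 = 0 := by rw [← coeff_zero_eq_eval_zero, hq]
  rw [h, h, h, derivative_comp, eval_mul, eval_comp, hq', mul_comm]

theorem isPrimitive_of_isUnit_eval {R : Type*} [CommRing R] {f : R[X]} {a : R}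
    (h : IsUnit (f.eval a)) : f.IsPrimitive := by
  rw [isPrimitive_iff_isUnit_of_C_dvd]
  rintro r ⟨g, rfl⟩
  rw [eval_mul, eval_C] at h
  exact isUnit_of_mul_isUnit_left h

theorem eval_one_reverse {R : Type*} [CommSemiring R] (f : R[X]) :
    f.reverse.eval 1 = f.eval 1 := by
  let _ : Invertible (1 : R) := invertibleOne
  simpa using eval₂_reverse_mul_pow (RingHom.id R) 1 f

theorem aeval_inv_reverse_eq_zero {R K : Type*} [CommSemiring R] [Field K] [Algebra R K]
    {f : R[X]} {x : K} (hx0 : x ≠ 0) (hx : aeval x f = 0) : aeval x⁻¹ f.reverse = 0 := by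
  let _ : Invertible x := invertibleOfNonzero hx0
  rwa [← invOf_eq_inv, aeval_def, eval₂_reverse_eq_zero_iff, ← aeval_def]

theorem natTrailingDegree_eq_one {R : Type*} [Semiring R] {f : R[X]} (h0 : f.coeff 0 = 0)
    (h1 : f.coeff 1 ≠ 0) : f.natTrailingDegree = 1 :=
  le_antisymm (natTrailingDegree_le_of_ne_zero h1)
    (le_natTrailingDegree (fun hf => h1 (by simp [hf])) fun m hm => by interval_cases m; exact h0)

theorem leadingCoeff_reverse_of_coeff_zero_eq_zero {R : Type*} [Semiring R] {f : R[X]}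
    (h0 : f.coeff 0 = 0) (h1 : f.coeff 1 ≠ 0) : f.reverse.leadingCoeff = f.coeff 1 := by
  rw [reverse_leadingCoeff, trailingCoeff, natTrailingDegree_eq_one h0 h1]

theorem isEisensteinAt_reverse {R : Type*} [CommSemiring R] {f : R[X]} {𝓟 : Ideal R}
    (h0 : f.coeff 0 = 0) (h1 : f.coeff 1 ∉ 𝓟) (hmem : ∀ i, i ≠ 1 → f.coeff i ∈ 𝓟)
    (hlead : f.leadingCoeff ∉ 𝓟 ^ 2) : f.reverse.IsEisensteinAt 𝓟 := by
  have h1' : f.coeff 1 ≠ 0 := fun h => h1 (h ▸ 𝓟.zero_mem)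
  refine ⟨?_, fun {n} hn => ?_, ?_⟩
  · rwa [leadingCoeff_reverse_of_coeff_zero_eq_zero h0 h1']
  · rw [reverse_natDegree, natTrailingDegree_eq_one h0 h1'] at hn
    rw [coeff_reverse, revAt_le (by omega)]
    exact hmem _ (by omega)
  · rwa [coeff_zero_reverse]

theorem IsEisensteinAt.not_isIntegral {R S : Type*} [CommRing R] [IsDomain R]
    [IsIntegrallyClosed R] [CommRing S] [IsDomain S] [Algebra R S] [Module.IsTorsionFree R S]
    {𝓟 : Ideal R} [𝓟.IsPrime] {f : R[X]} (hf : f.IsEisensteinAt 𝓟) (hprim : f.IsPrimitive)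
    (hlc : ¬ IsUnit f.leadingCoeff) {x : S} (hx : aeval x f = 0) : ¬ IsIntegral R x := by
  intro hint
  have hdeg : 0 < f.natDegree := by
    by_contra! h
    rw [eq_C_of_natDegree_eq_zero (Nat.le_zero.mp h)] at hprim hlc
    exact hlc (by simpa using hprim _ dvd_rfl)
  obtain ⟨q, hfq⟩ := minpoly.isIntegrallyClosed_dvd hint hx
  have hq : IsUnit q :=
    ((hf.irreducible ‹_› hprim hdeg).isUnit_or_isUnit hfq).resolve_left (minpoly.not_isUnit R x)
  apply hlc
  rw [hfq, leadingCoeff_mul, (minpoly.monic hint).leadingCoeff, one_mul]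
  exact hq.map leadingCoeffHom

end Polynomial

theorem two_mul_X_mul_one_sub_X :
    (2 * X * (1 - X) : ℤ[X]) = C (-2) * X ^ 2 + C 2 * X + C 0 := by
  simp only [C_neg, C_ofNat, C_0]
  ring

noncomputable def fixedPointPoly (F : ℤ[X]) : ℤ[X] := X - F.comp (2 * X * (1 - X))

section fixedPointPoly

variable {F : ℤ[X]}

theorem aeval_fixedPointPoly (r : ℝ) :
    aeval r (fixedPointPoly F) = r - aeval (2 * r * (1 - r)) F := by
  simp only [fixedPointPoly, map_sub, aeval_X, aeval_comp, map_mul, map_one, map_ofNat]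

theorem eval_one_fixedPointPoly (h0 : F.coeff 0 = 0) : (fixedPointPoly F).eval 1 = 1 := by
  simp [fixedPointPoly, eval_comp, ← coeff_zero_eq_eval_zero, h0]

theorem coeff_zero_fixedPointPoly (h0 : F.coeff 0 = 0) : (fixedPointPoly F).coeff 0 = 0 := by
  have h : (fixedPointPoly F).eval 0 = -F.eval 0 := by simp [fixedPointPoly, eval_comp]
  rw [coeff_zero_eq_eval_zero, h, ← coeff_zero_eq_eval_zero, h0, neg_zero]

theorem coeff_one_fixedPointPoly : (fixedPointPoly F).coeff 1 = 1 - 2 * F.coeff 1 := by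
  rw [fixedPointPoly, coeff_sub, coeff_X_one,
    coeff_one_comp_of_coeff_zero_eq_zero _ (by simp [two_mul_X_mul_one_sub_X]),
    two_mul_X_mul_one_sub_X]
  simp [mul_comm]

theorem coeff_fixedPointPoly_mem_span {p : ℤ} (hdvd : ∀ i, p ∣ F.coeff i) {i : ℕ} (hi : i ≠ 1) :
    (fixedPointPoly F).coeff i ∈ Ideal.span {p} := by
  obtain ⟨F', rfl⟩ := (C_dvd_iff_dvd_coeff p F).mpr hdvd
  rw [Ideal.mem_span_singleton, fixedPointPoly, mul_comp, C_comp, coeff_sub, coeff_C_mul, coeff_X,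
    if_neg (Ne.symm hi), zero_sub, dvd_neg]
  exact dvd_mul_right _ _

theorem leadingCoeff_fixedPointPoly (hF : 0 < F.natDegree) :
    (fixedPointPoly F).leadingCoeff = -(F.leadingCoeff * (-2) ^ F.natDegree) := by
  have hdeg : (2 * X * (1 - X) : ℤ[X]).natDegree = 2 := by
    rw [two_mul_X_mul_one_sub_X]
    exact natDegree_quadratic (by norm_num)
  have hlc : (2 * X * (1 - X) : ℤ[X]).leadingCoeff = -2 := by
    rw [two_mul_X_mul_one_sub_X]
    exact leadingCoeff_quadratic (by norm_num)
  have hlt : (X : ℤ[X]).degree < (F.comp (2 * X * (1 - X))).degree :=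
    degree_lt_degree (by rw [natDegree_X, natDegree_comp, hdeg]; omega)
  rw [fixedPointPoly, leadingCoeff_sub_of_degree_lt' hlt, leadingCoeff_comp (by omega), hlc]

theorem coeff_one_fixedPointPoly_notMem_span {p : ℤ} (hp : ¬ IsUnit p) (hdvd : p ∣ F.coeff 1) :
    (fixedPointPoly F).coeff 1 ∉ Ideal.span {p} := by
  rw [Ideal.mem_span_singleton, coeff_one_fixedPointPoly]
  intro h
  exact hp (isUnit_of_dvd_one (by simpa using dvd_add h (hdvd.mul_left 2)))

theorem leadingCoeff_fixedPointPoly_notMem_span_sq {p : ℤ} (hp2 : IsCoprime p 2)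
    (hF : 0 < F.natDegree) (hndvd : ¬ p ^ 2 ∣ F.leadingCoeff) :
    (fixedPointPoly F).leadingCoeff ∉ Ideal.span {p} ^ 2 := by
  rw [Ideal.span_singleton_pow, Ideal.mem_span_singleton, leadingCoeff_fixedPointPoly hF, dvd_neg]
  exact fun h => hndvd (hp2.neg_right.pow.dvd_of_dvd_mul_right h)

theorem isEisensteinAt_reverse_fixedPointPoly {p : ℤ} (hp : Prime p) (hp2 : IsCoprime p 2)
    (h0 : F.coeff 0 = 0) (hF : 0 < F.natDegree) (hdvd : ∀ i, p ∣ F.coeff i)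
    (hndvd : ¬ p ^ 2 ∣ F.leadingCoeff) :
    (fixedPointPoly F).reverse.IsEisensteinAt (Ideal.span {p}) :=
  isEisensteinAt_reverse (coeff_zero_fixedPointPoly h0)
    (coeff_one_fixedPointPoly_notMem_span hp.not_isUnit (hdvd 1))
    (fun _ => coeff_fixedPointPoly_mem_span hdvd)
    (leadingCoeff_fixedPointPoly_notMem_span_sq hp2 hF hndvd)

theorem not_isUnit_leadingCoeff_reverse_fixedPointPoly {p : ℤ} (hp : ¬ IsUnit p)
    (h0 : F.coeff 0 = 0) (h1 : F.coeff 1 ≠ 0) (hdvd : p ∣ F.coeff 1) :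
    ¬ IsUnit (fixedPointPoly F).reverse.leadingCoeff := by
  rw [leadingCoeff_reverse_of_coeff_zero_eq_zero (coeff_zero_fixedPointPoly h0)
    (by rw [coeff_one_fixedPointPoly]; omega), coeff_one_fixedPointPoly, Int.isUnit_iff]
  rintro (h | h)
  · omega
  · have h1' : F.coeff 1 = 1 := by omega
    exact hp (isUnit_of_dvd_one (h1' ▸ hdvd))

end fixedPointPoly

/-- let `F ∈ ℤ[X]` have zero constant term, nonzero linear term,
and a prime `p ≠ 2` dividing every coefficient of `F` while `p²` divides none of
the nonzero coefficients.  If `r ∈ (0,1)` satisfies `r = F(2r(1-r))`, then `1/r`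
is not an algebraic integer. -/
theorem one_div_r_not_algebraic_integer (F : Polynomial ℤ)
    (h0 : F.coeff 0 = 0) (h1 : F.coeff 1 ≠ 0)
    (p : ℕ) (hp : p.Prime) (hp2 : p ≠ 2)
    (hdvd : ∀ i, (p : ℤ) ∣ F.coeff i)
    (hndvd : ∀ i, F.coeff i ≠ 0 → ¬ ((p : ℤ) ^ 2 ∣ F.coeff i))
    (r : ℝ) (hr : r ∈ Set.Ioo (0 : ℝ) 1)
    (heq : r = aeval (2 * r * (1 - r)) F) :
    ¬ IsIntegral ℤ (1 / r) := by
  have hpZ : Prime (p : ℤ) := Nat.prime_iff_prime_int.mp hp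
  have hp2Z : IsCoprime (p : ℤ) 2 :=
    Nat.isCoprime_iff_coprime.mpr ((Nat.coprime_primes hp Nat.prime_two).mpr hp2)
  have hF : 0 < F.natDegree := le_natDegree_of_ne_zero h1
  have hlc : F.leadingCoeff ≠ 0 := leadingCoeff_ne_zero.mpr (by rintro rfl; exact h1 rfl)
  have : (Ideal.span {(p : ℤ)}).IsPrime := (Ideal.span_singleton_prime hpZ.ne_zero).mpr hpZ
  refine (isEisensteinAt_reverse_fixedPointPoly hpZ hp2Z h0 hF hdvd (hndvd _ hlc)).not_isIntegral
    (isPrimitive_of_isUnit_eval (a := 1) ?_)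
    (not_isUnit_leadingCoeff_reverse_fixedPointPoly hpZ.not_isUnit h0 h1 (hdvd 1)) ?_
  · rw [eval_one_reverse, eval_one_fixedPointPoly h0]
    exact isUnit_one
  · rw [one_div]
    exact aeval_inv_reverse_eq_zero hr.1.ne' (by rw [aeval_fixedPointPoly, ← heq, sub_self])
end
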